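/- arXiv:2511.14827 — 5 statements merged into one kernel-verified Lean document; each statement's English description precedes it below -/
import Mathlib

section
/- Let d ≥ 1 and let E : ℝ^d → ℝ be three times continuously differentiable with ∇E, the Hessian ∇²E, and the third derivative ∇³E all bounded on ℝ^d. For η > 0 define E⁺η(x) = E(x) + (η/4)‖∇E(x)‖² and let Φη_t denote the time-t flow map of the ODE ẋ = −∇E⁺η(x). Then there exist C > 0 and η₀ > 0 such that for every η ∈ (0, η₀] and every x ∈ ℝ^d, ‖Φη_η(x) − (x − η∇E(x))‖ ≤ C η³; that is, a single forward-Euler gradient-descent step agrees with the time-η flow of the modified energy up to an error of order η³. -/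
/-!
Write `g = ∇E` and `H = D(∇E)`. Since the Hessian is symmetric, `∇E⁺η = g + (η/2) H g`.
Along the modified flow `γ` the displacement is `O(t)`, so `g (γ t) = g x - t H g(x) + O(η²)`;
integrating the velocity `-(g + (η/2) H g)(γ t)` over `[0, η]`, the curvature contribution
`(η²/2) H g(x)` of the flow is cancelled exactly by the modification `-(η²/2) H g(x)`,
leaving `γ η = x - η g(x) + O(η³)`. Both estimates are mean-value inequalities for explicit
error functions of `t`, with constants built from bounds on `∇E`, `∇²E` and `∇³E`.
-/

open InnerProductSpace Set

section Gradient

variable {F : Type*} [NormedAddCommGroup F] [InnerProductSpace ℝ F] [CompleteSpace F]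
  {E : F → ℝ} {x : F}

/-- Over `ℝ` the Riesz isomorphism `toDual` is linear, not just semilinear, so the gradient is a
linear isometric image of the derivative. -/
theorem gradient_eq_comp_fderiv (E : F → ℝ) :
    gradient E = ((toDual ℝ F).symm : StrongDual ℝ F ≃ₗᵢ[ℝ] F) ∘ fderiv ℝ E :=
  rfl

theorem ContDiff.gradient {m n : WithTop ℕ∞} (hE : ContDiff ℝ n E) (hmn : m + 1 ≤ n) :
    ContDiff ℝ m (gradient E) := by
  rw [gradient_eq_comp_fderiv]
  exact (LinearIsometryEquiv.contDiff _).comp (hE.fderiv_right hmn)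

theorem norm_iteratedFDeriv_gradient (E : F → ℝ) (x : F) (k : ℕ) :
    ‖iteratedFDeriv ℝ k (gradient E) x‖ = ‖iteratedFDeriv ℝ (k + 1) E x‖ := by
  rw [gradient_eq_comp_fderiv, LinearIsometryEquiv.norm_iteratedFDeriv_comp_left,
    norm_iteratedFDeriv_fderiv]

theorem norm_fderiv_gradient (E : F → ℝ) (x : F) :
    ‖fderiv ℝ (gradient E) x‖ = ‖iteratedFDeriv ℝ 2 E x‖ := by
  rw [← norm_iteratedFDeriv_one, norm_iteratedFDeriv_gradient]

theorem norm_fderiv_fderiv_gradient (E : F → ℝ) (x : F) :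
    ‖fderiv ℝ (fderiv ℝ (gradient E)) x‖ = ‖iteratedFDeriv ℝ 3 E x‖ := by
  rw [← norm_iteratedFDeriv_one, norm_iteratedFDeriv_fderiv, norm_iteratedFDeriv_gradient]

theorem norm_gradient_sub_le (hE : ContDiff ℝ 2 E) {M : ℝ}
    (hM : ∀ x, ‖iteratedFDeriv ℝ 2 E x‖ ≤ M) (x y : F) :
    ‖gradient E x - gradient E y‖ ≤ M * ‖x - y‖ :=
  convex_univ.norm_image_sub_le_of_norm_fderiv_le
    (fun z _ => (hE.gradient (m := 1) (by norm_num)).differentiable one_ne_zero z)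
    (fun z _ => (norm_fderiv_gradient E z).trans_le (hM z)) trivial trivial

theorem norm_fderiv_gradient_sub_le (hE : ContDiff ℝ 3 E) {M : ℝ}
    (hM : ∀ x, ‖iteratedFDeriv ℝ 3 E x‖ ≤ M) (x y : F) :
    ‖fderiv ℝ (gradient E) x - fderiv ℝ (gradient E) y‖ ≤ M * ‖x - y‖ :=
  convex_univ.norm_image_sub_le_of_norm_fderiv_le
    (fun z _ => ((hE.gradient (m := 2) (by norm_num)).fderiv_right (m := 1)
      (by norm_num)).differentiable one_ne_zero z)
    (fun z _ => (norm_fderiv_fderiv_gradient E z).trans_le (hM z)) trivial trivial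

theorem inner_fderiv_gradient_apply (E : F → ℝ) (x v w : F) :
    ⟪fderiv ℝ (gradient E) x v, w⟫_ℝ = fderiv ℝ (fderiv ℝ E) x v w := by
  rw [gradient_eq_comp_fderiv, LinearIsometryEquiv.comp_fderiv]
  exact toDual_symm_apply

theorem inner_fderiv_gradient_comm (hE : ContDiffAt ℝ 2 E x) (v w : F) :
    ⟪fderiv ℝ (gradient E) x v, w⟫_ℝ = ⟪fderiv ℝ (gradient E) x w, v⟫_ℝ := by
  rw [inner_fderiv_gradient_apply, inner_fderiv_gradient_apply]
  exact hE.isSymmSndFDerivAt (by simp) v w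

theorem hasGradientAt_add_mul_norm_sq_gradient (hE : ContDiffAt ℝ 2 E x) (c : ℝ) :
    HasGradientAt (fun y => E y + c * ‖gradient E y‖ ^ 2)
      (gradient E x + (2 * c) • fderiv ℝ (gradient E) x (gradient E x)) x := by
  have hg : DifferentiableAt ℝ (gradient E) x := by
    rw [gradient_eq_comp_fderiv]
    exact (LinearIsometryEquiv.differentiable _ _).comp x
      ((hE.fderiv_right (m := 1) (by norm_num)).differentiableAt one_ne_zero)
  rw [hasGradientAt_iff_hasFDerivAt]
  refine ((hE.differentiableAt two_ne_zero).hasFDerivAt.fun_add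
    (hg.hasFDerivAt.norm_sq.const_mul c)).congr_fderiv ?_
  ext v
  simp only [add_apply, smul_apply,
    ContinuousLinearMap.comp_apply, coe_innerSL_apply, inner_gradient_left, nsmul_eq_mul,
    Nat.cast_ofNat, smul_eq_mul, map_add, toDual_gradient, map_smul, toDual_apply_apply,
    inner_fderiv_gradient_comm hE, inner_gradient_right, Real.ringHom_apply, add_right_inj]
  ring

end Gradient

theorem norm_apply_sub_apply_le {𝕜 X Y Z : Type*} [NontriviallyNormedField 𝕜]
    [SeminormedAddCommGroup X] [NormedAddCommGroup Y] [NormedSpace 𝕜 Y]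
    [NormedAddCommGroup Z] [NormedSpace 𝕜 Z] {A : X → Y →L[𝕜] Z} {u : X → Y} {a b La Lu : ℝ}
    (hA : ∀ y, ‖A y‖ ≤ a) (hu : ∀ y, ‖u y‖ ≤ b)
    (hAL : ∀ y z, ‖A y - A z‖ ≤ La * ‖y - z‖) (huL : ∀ y z, ‖u y - u z‖ ≤ Lu * ‖y - z‖)
    (y z : X) :
    ‖A y (u y) - A z (u z)‖ ≤ (La * b + a * Lu) * ‖y - z‖ := by
  have ha : 0 ≤ a := (norm_nonneg _).trans (hA z)
  have hsplit : A y (u y) - A z (u z) = (A y - A z) (u y) + A z (u y - u z) := by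
    simp only [sub_apply, map_sub]
    abel
  calc ‖A y (u y) - A z (u z)‖ ≤ ‖A y - A z‖ * ‖u y‖ + ‖A z‖ * ‖u y - u z‖ := by
        rw [hsplit]
        exact norm_add_le_of_le ((A y - A z).le_opNorm _) ((A z).le_opNorm _)
    _ ≤ La * ‖y - z‖ * b + a * (Lu * ‖y - z‖) := by
        gcongr
        exacts [(norm_nonneg _).trans (hAL y z), hAL y z, hu y, hA z, huL y z]
    _ = (La * b + a * Lu) * ‖y - z‖ := by ring

theorem norm_neg_sub_smul_le {V : Type*} [SeminormedAddCommGroup V] [NormedSpace ℝ V]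
    (u v : V) {c : ℝ} (hc : 0 ≤ c) : ‖-u - c • v‖ ≤ ‖u‖ + c * ‖v‖ :=
  (norm_sub_le _ _).trans_eq (by rw [norm_neg, norm_smul, Real.norm_of_nonneg hc])

section FlowEstimate

variable {X : Type*} [NormedAddCommGroup X] [NormedSpace ℝ X]
  {g : X → X} {H : X → X →L[ℝ] X} {η K L N t : ℝ} {x : X} {γ : ℝ → X}

theorem norm_flow_sub_le (hK : ∀ y, ‖g y + (η / 2) • H y (g y)‖ ≤ K) (hγ0 : γ 0 = x)
    (hγ : ∀ t ∈ Icc 0 η, HasDerivAt γ (-(g (γ t) + (η / 2) • H (γ t) (g (γ t)))) t)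
    (ht : t ∈ Icc 0 η) : ‖γ t - x‖ ≤ K * t := by
  have := norm_image_sub_le_of_norm_deriv_le_segment' (fun s hs => (hγ s hs).hasDerivWithinAt)
    (fun s _ => (norm_neg _).trans_le (hK (γ s))) t ht
  rwa [hγ0, sub_zero] at this

theorem norm_apply_flow_sub_le (hK : ∀ y, ‖g y + (η / 2) • H y (g y)‖ ≤ K)
    (hL : ∀ y z, ‖H y (g y) - H z (g z)‖ ≤ L * ‖y - z‖) (hL0 : 0 ≤ L) (hγ0 : γ 0 = x)
    (hγ : ∀ t ∈ Icc 0 η, HasDerivAt γ (-(g (γ t) + (η / 2) • H (γ t) (g (γ t)))) t)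
    (ht : t ∈ Icc 0 η) : ‖H (γ t) (g (γ t)) - H x (g x)‖ ≤ L * K * η := by
  have hK0 : 0 ≤ K := (norm_nonneg _).trans (hK x)
  calc _ ≤ L * ‖γ t - x‖ := hL _ _
    _ ≤ L * (K * η) := by gcongr; exact (norm_flow_sub_le hK hγ0 hγ ht).trans (by gcongr; exact ht.2)
    _ = L * K * η := by ring

theorem norm_flow_gradient_sub_le (hg : ∀ y, HasFDerivAt g (H y) y)
    (hK : ∀ y, ‖g y + (η / 2) • H y (g y)‖ ≤ K)
    (hL : ∀ y z, ‖H y (g y) - H z (g z)‖ ≤ L * ‖y - z‖) (hL0 : 0 ≤ L)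
    (hN : ∀ y, ‖H y (H y (g y))‖ ≤ N) (hγ0 : γ 0 = x)
    (hγ : ∀ t ∈ Icc 0 η, HasDerivAt γ (-(g (γ t) + (η / 2) • H (γ t) (g (γ t)))) t)
    (ht : t ∈ Icc 0 η) : ‖g (γ t) - g x + t • H x (g x)‖ ≤ (L * K + N / 2) * η ^ 2 := by
  have hK0 : 0 ≤ K := (norm_nonneg _).trans (hK x)
  have hN0 : 0 ≤ N := (norm_nonneg _).trans (hN x)
  have hη : 0 ≤ η := ht.1.trans ht.2
  have hderiv : ∀ s ∈ Ico 0 η,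
      ‖H (γ s) (-(g (γ s) + (η / 2) • H (γ s) (g (γ s)))) + (1 : ℝ) • H x (g x)‖ ≤
        (L * K + N / 2) * η := by
    intro s hs
    have hid : H (γ s) (-(g (γ s) + (η / 2) • H (γ s) (g (γ s)))) + (1 : ℝ) • H x (g x) =
        -(H (γ s) (g (γ s)) - H x (g x)) - (η / 2) • H (γ s) (H (γ s) (g (γ s))) := by
      simp only [map_neg, map_add, map_smul]
      module
    rw [hid]
    calc _ ≤ ‖H (γ s) (g (γ s)) - H x (g x)‖ + η / 2 * ‖H (γ s) (H (γ s) (g (γ s)))‖ :=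
          norm_neg_sub_smul_le _ _ (by positivity)
      _ ≤ L * K * η + η / 2 * N := by
          gcongr
          exacts [norm_apply_flow_sub_le hK hL hL0 hγ0 hγ (Ico_subset_Icc_self hs), hN _]
      _ = (L * K + N / 2) * η := by ring
  have := norm_image_sub_le_of_norm_deriv_le_segment'
    (f := fun s => g (γ s) - g x + s • H x (g x))
    (fun s hs => ((((hg (γ s)).comp_hasDerivAt s (hγ s hs)).sub_const (g x)).add
      ((hasDerivAt_id s).smul_const (H x (g x)))).hasDerivWithinAt) hderiv t ht
  simp only [hγ0, sub_self, zero_smul, add_zero, sub_zero] at this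
  refine this.trans ?_
  rw [sq, ← mul_assoc]
  gcongr
  exact ht.2

theorem norm_flow_sub_euler_step_le (hg : ∀ y, HasFDerivAt g (H y) y)
    (hK : ∀ y, ‖g y + (η / 2) • H y (g y)‖ ≤ K)
    (hL : ∀ y z, ‖H y (g y) - H z (g z)‖ ≤ L * ‖y - z‖) (hL0 : 0 ≤ L)
    (hN : ∀ y, ‖H y (H y (g y))‖ ≤ N) (hη : 0 ≤ η) (hγ0 : γ 0 = x)
    (hγ : ∀ t ∈ Icc 0 η, HasDerivAt γ (-(g (γ t) + (η / 2) • H (γ t) (g (γ t)))) t) :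
    ‖γ η - (x - η • g x)‖ ≤ (3 * L * K + N) / 2 * η ^ 3 := by
  have hq (t : ℝ) : HasDerivAt (fun t => (η * t - t ^ 2) / 2) (η / 2 - t) t :=
    ((((hasDerivAt_id' t).const_mul η).sub (hasDerivAt_pow 2 t)).div_const 2).congr_deriv
      (by norm_num; ring)
  have hderiv : ∀ t ∈ Ico 0 η,
      ‖-(g (γ t) + (η / 2) • H (γ t) (g (γ t))) + (1 : ℝ) • g x + (η / 2 - t) • H x (g x)‖ ≤
        (3 * L * K + N) / 2 * η ^ 2 := by
    intro t ht
    have ht' : t ∈ Icc 0 η := Ico_subset_Icc_self ht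
    have hid : -(g (γ t) + (η / 2) • H (γ t) (g (γ t))) + (1 : ℝ) • g x +
          (η / 2 - t) • H x (g x) =
        -(g (γ t) - g x + t • H x (g x)) - (η / 2) • (H (γ t) (g (γ t)) - H x (g x)) := by
      module
    rw [hid]
    calc _ ≤ ‖g (γ t) - g x + t • H x (g x)‖ + η / 2 * ‖H (γ t) (g (γ t)) - H x (g x)‖ :=
          norm_neg_sub_smul_le _ _ (by positivity)
      _ ≤ (L * K + N / 2) * η ^ 2 + η / 2 * (L * K * η) := by
          gcongr
          exacts [norm_flow_gradient_sub_le hg hK hL hL0 hN hγ0 hγ ht',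
            norm_apply_flow_sub_le hK hL hL0 hγ0 hγ ht']
      _ = (3 * L * K + N) / 2 * η ^ 2 := by ring
  -- The correction `(η t - t²)/2 • H x (g x)` vanishes at both ends `t = 0` and `t = η`.
  have := norm_image_sub_le_of_norm_deriv_le_segment'
    (f := fun t => γ t - x + t • g x + ((η * t - t ^ 2) / 2) • H x (g x))
    (fun t ht => ((((hγ t ht).sub_const x).add ((hasDerivAt_id t).smul_const (g x))).add
      ((hq t).smul_const (H x (g x)))).hasDerivWithinAt) hderiv η ⟨hη, le_rfl⟩
  convert this using 1
  · rw [hγ0]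
    congr 1
    module
  · ring

end FlowEstimate

section ModifiedFlow

variable {F : Type*} [NormedAddCommGroup F] [InnerProductSpace ℝ F] [CompleteSpace F]
  {E : F → ℝ} {M₁ M₂ M₃ η : ℝ} {x : F} {γ : ℝ → F}

theorem norm_modified_flow_sub_euler_step_le (hE : ContDiff ℝ 3 E)
    (hM₁ : ∀ x, ‖gradient E x‖ ≤ M₁) (hM₂ : ∀ x, ‖iteratedFDeriv ℝ 2 E x‖ ≤ M₂)
    (hM₃ : ∀ x, ‖iteratedFDeriv ℝ 3 E x‖ ≤ M₃) (hη : η ∈ Icc 0 1) (hγ0 : γ 0 = x)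
    (hγ : ∀ t ∈ Icc 0 η,
      HasDerivAt γ (-(gradient (fun y => E y + (η / 4) * ‖gradient E y‖ ^ 2) (γ t))) t) :
    ‖γ η - (x - η • gradient E x)‖ ≤
      (3 * (M₃ * M₁ + M₂ * M₂) * (M₁ + M₂ * M₁ / 2) + M₂ * (M₂ * M₁)) / 2 * η ^ 3 := by
  obtain ⟨hη0, hη1⟩ := hη
  have hM₁0 : 0 ≤ M₁ := (norm_nonneg _).trans (hM₁ 0)
  have hM₂0 : 0 ≤ M₂ := (norm_nonneg _).trans (hM₂ 0)
  have hM₃0 : 0 ≤ M₃ := (norm_nonneg _).trans (hM₃ 0)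
  set H := fderiv ℝ (gradient E)
  have hH y : ‖H y‖ ≤ M₂ := (norm_fderiv_gradient E y).trans_le (hM₂ y)
  have hHg y : ‖H y (gradient E y)‖ ≤ M₂ * M₁ := (H y).le_of_opNorm_le_of_le (hH y) (hM₁ y)
  have hflow t (ht : t ∈ Icc 0 η) :
      HasDerivAt γ (-(gradient E (γ t) + (η / 2) • H (γ t) (gradient E (γ t)))) t := by
    convert hγ t ht using 2
    rw [(hasGradientAt_add_mul_norm_sq_gradient (hE.contDiffAt.of_le (by norm_num)) _).gradient]
    congr 2
    ring
  have hK y : ‖gradient E y + (η / 2) • H y (gradient E y)‖ ≤ M₁ + M₂ * M₁ / 2 := by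
    calc _ ≤ ‖gradient E y‖ + η / 2 * ‖H y (gradient E y)‖ :=
          (norm_add_le _ _).trans_eq (by rw [norm_smul, Real.norm_of_nonneg (by positivity)])
      _ ≤ M₁ + 1 / 2 * (M₂ * M₁) := by gcongr; exacts [hM₁ y, hHg y]
      _ = M₁ + M₂ * M₁ / 2 := by ring
  exact norm_flow_sub_euler_step_le
    (fun y => ((hE.gradient (m := 2) (by norm_num)).differentiable two_ne_zero y).hasFDerivAt)
    hK (norm_apply_sub_apply_le hH hM₁ (norm_fderiv_gradient_sub_le hE hM₃)
      (norm_gradient_sub_le (hE.of_le (by norm_num)) hM₂)) (by positivity)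
    (fun y => (H y).le_of_opNorm_le_of_le (hH y) (hHg y)) hη0 hγ0 hflow

end ModifiedFlow

theorem forward_euler_one_step_matching_general
    (d : ℕ) (E : EuclideanSpace ℝ (Fin d) → ℝ)
    (hE : ContDiff ℝ 3 E)
    (hgrad : ∃ M : ℝ, ∀ x, ‖gradient E x‖ ≤ M)
    (hhess : ∃ M : ℝ, ∀ x, ‖iteratedFDeriv ℝ 2 E x‖ ≤ M)
    (hthird : ∃ M : ℝ, ∀ x, ‖iteratedFDeriv ℝ 3 E x‖ ≤ M) :
    ∃ C η₀ : ℝ, 0 < C ∧ 0 < η₀ ∧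
      ∀ η : ℝ, η ∈ Set.Ioc (0 : ℝ) η₀ →
        ∀ x : EuclideanSpace ℝ (Fin d),
        ∀ γ : ℝ → EuclideanSpace ℝ (Fin d),
          γ 0 = x →
          (∀ t ∈ Set.Icc (0 : ℝ) η,
            HasDerivAt γ
              (-(gradient (fun y => E y + (η / 4) * ‖gradient E y‖ ^ 2) (γ t))) t) →
          ‖γ η - (x - η • gradient E x)‖ ≤ C * η ^ 3 := by
  obtain ⟨M₁, hM₁⟩ := hgrad
  obtain ⟨M₂, hM₂⟩ := hhess
  obtain ⟨M₃, hM₃⟩ := hthird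
  have hM₁0 : 0 ≤ M₁ := (norm_nonneg _).trans (hM₁ 0)
  have hM₂0 : 0 ≤ M₂ := (norm_nonneg _).trans (hM₂ 0)
  have hM₃0 : 0 ≤ M₃ := (norm_nonneg _).trans (hM₃ 0)
  set C := (3 * (M₃ * M₁ + M₂ * M₂) * (M₁ + M₂ * M₁ / 2) + M₂ * (M₂ * M₁)) / 2
  refine ⟨C + 1, 1, by positivity, one_pos, fun η ⟨hη0, hη1⟩ x γ hγ0 hγ => ?_⟩
  calc _ ≤ C * η ^ 3 :=
        norm_modified_flow_sub_euler_step_le hE hM₁ hM₂ hM₃ ⟨hη0.le, hη1⟩ hγ0 hγ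
    _ ≤ (C + 1) * η ^ 3 := by gcongr; linarith

/-- **One-step matching of forward Euler with the modified flow.**
A single gradient-descent step `x ↦ x − η∇E(x)` agrees with the time-`η` flow of the
modified energy `E⁺η(x) = E(x) + (η/4)‖∇E(x)‖²` up to `O(η³)`. -/
theorem forward_euler_one_step_matching
    (d : ℕ) (hd : 1 ≤ d) (E : EuclideanSpace ℝ (Fin d) → ℝ)
    (hE : ContDiff ℝ 3 E)
    (hgrad : ∃ M : ℝ, ∀ x, ‖gradient E x‖ ≤ M)
    (hhess : ∃ M : ℝ, ∀ x, ‖iteratedFDeriv ℝ 2 E x‖ ≤ M)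
    (hthird : ∃ M : ℝ, ∀ x, ‖iteratedFDeriv ℝ 3 E x‖ ≤ M) :
    ∃ C η₀ : ℝ, 0 < C ∧ 0 < η₀ ∧
      ∀ η : ℝ, η ∈ Set.Ioc (0 : ℝ) η₀ →
        ∀ x : EuclideanSpace ℝ (Fin d),
        ∀ γ : ℝ → EuclideanSpace ℝ (Fin d),
          γ 0 = x →
          (∀ t ∈ Set.Icc (0 : ℝ) η,
            HasDerivAt γ
              (-(gradient (fun y => E y + (η / 4) * ‖gradient E y‖ ^ 2) (γ t))) t) →
          ‖γ η - (x - η • gradient E x)‖ ≤ C * η ^ 3 :=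
  forward_euler_one_step_matching_general d E hE hgrad hhess hthird
end

section
/- Let d ≥ 1, let A be a real d × d matrix, and let μ₀ ∈ ℝ^d. For η > 0 small enough that I − ηA is invertible, define the JKO mean update μ_JKO(η) = (I − ηA)^{-1} μ₀ and the second-order modified flow value μ(η) = exp(ηA + (η²/2)A²) μ₀, where exp is the matrix exponential. Then ‖μ(η) − μ_JKO(η)‖ = O(η³) as η → 0⁺; that is, the solution of the corrected mean dynamics μ̇ = Aμ + (η/2)A²μ matches the analytic JKO mean update to third order in η. -/
/-!
With `s = ηA` and `B = ηA + (η²/2)A²`, both updates agree with `1 + s + s²` up to `O(η³)`: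
the Neumann series gives `(1 - s)⁻¹ = 1 + s + s² + O(‖s‖³)`, while the exponential series gives
`exp B = 1 + B + B²/2 + O(‖B‖³)` and `1 + B + B²/2 = 1 + s + s² + η³(A³/2 + ηA⁴/8)`.
-/

open NormedSpace Asymptotics Filter Topology

theorem isBigO_pow_smul_of_continuousAt {E : Type*} [NormedAddCommGroup E] [NormedSpace ℝ E]
    {c : ℝ → E} (hc : ContinuousAt c 0) (n : ℕ) :
    (fun η : ℝ => η ^ n • c η) =O[𝓝 0] fun η => η ^ n := by
  simpa using (isBigO_refl (fun η : ℝ => η ^ n) _).smul (hc.tendsto.isBigO_one ℝ)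

theorem inverse_one_sub_sub_sum_range_three_isBigO {R : Type*} [NormedRing R]
    [HasSummableGeomSeries R] :
    (fun x : R => Ring.inverse (1 - x) - (1 + x + x * x)) =O[𝓝 0] fun x => ‖x‖ ^ 3 := by
  have h := (NormedRing.inverse_add_norm_diff_nth_order (1 : Rˣ) 3).comp_tendsto
    (continuous_neg.tendsto' (0 : R) 0 neg_zero)
  simpa [Function.comp_def, Finset.sum_range_succ, pow_two, sub_eq_add_neg, add_assoc] using h

section ModifiedFlow

variable {𝔸 : Type*} [NormedRing 𝔸] [NormedAlgebra ℝ 𝔸] [CompleteSpace 𝔸]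

theorem exp_sub_sum_range_three_isBigO :
    (fun x : 𝔸 => exp x - (1 + x + (2⁻¹ : ℝ) • (x * x))) =O[𝓝 0] fun x => ‖x‖ ^ 3 := by
  have h := (exp_hasFPowerSeriesAt_zero (𝕂 := ℝ) (𝔸 := 𝔸)).isBigO_sub_partialSum_pow 3
  simpa [FormalMultilinearSeries.partialSum, Finset.sum_range_succ, expSeries_apply_eq, pow_two,
    add_assoc] using h

theorem exp_modifiedFlow_sub_inverse_isBigO (a : 𝔸) :
    (fun η : ℝ => exp (η • a + (η ^ 2 / 2) • (a * a)) - Ring.inverse (1 - η • a))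
      =O[𝓝 0] fun η => η ^ 3 := by
  set B : ℝ → 𝔸 := fun η => η • a + (η ^ 2 / 2) • (a * a)
  have hB : B =O[𝓝 0] fun η => η := by
    have h := isBigO_pow_smul_of_continuousAt (c := fun η : ℝ => a + (η / 2) • (a * a))
      (by fun_prop) 1
    refine h.congr (fun η => ?_) (fun η => pow_one η)
    module
  have hs : (fun η : ℝ => η • a) =O[𝓝 0] fun η => η := by
    simpa using isBigO_pow_smul_of_continuousAt (c := fun _ : ℝ => a) continuousAt_const 1
  have hexp := (exp_sub_sum_range_three_isBigO.comp_tendsto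
    (hB.trans_tendsto tendsto_id)).trans (hB.norm_left.pow 3)
  have hinv := (inverse_one_sub_sub_sum_range_three_isBigO.comp_tendsto
    (hs.trans_tendsto tendsto_id)).trans (hs.norm_left.pow 3)
  have hpoly := isBigO_pow_smul_of_continuousAt
    (c := fun η : ℝ => (2⁻¹ : ℝ) • (a * a * a) + (η / 8) • (a * a * a * a)) (by fun_prop) 3
  refine ((hexp.add hpoly).sub hinv).congr_left (fun η => ?_)
  simp only [Function.comp_apply, B]
  simp only [mul_add, add_mul, smul_mul_assoc, mul_smul_comm, smul_smul, mul_assoc]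
  module

end ModifiedFlow

theorem exists_pos_bound_on_Ioc_of_isBigO {E : Type*} [Norm E] {P : ℝ → Prop} {f : ℝ → E}
    {n : ℕ} (hP : ∀ᶠ η in 𝓝 0, P η) (hf : f =O[𝓝 0] fun η => η ^ n) :
    ∃ K η₀ : ℝ, 0 < K ∧ 0 < η₀ ∧ ∀ η ∈ Set.Ioc 0 η₀, P η ∧ ‖f η‖ ≤ K * η ^ n := by
  obtain ⟨K, hK, hfK⟩ := hf.exists_pos
  obtain ⟨η₀, hη₀, hsub⟩ := mem_nhdsGT_iff_exists_Ioc_subset.1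
    ((hP.and hfK.bound).filter_mono nhdsWithin_le_nhds)
  refine ⟨K, η₀, hK, hη₀, fun η hη => ?_⟩
  obtain ⟨hPη, hfη⟩ := hsub hη
  exact ⟨hPη, by rwa [Real.norm_of_nonneg (pow_nonneg hη.1.le n)] at hfη⟩

theorem jko_mean_second_order_matching_general
    (d : ℕ) (A : Matrix (Fin d) (Fin d) ℝ)
    (μ₀ : EuclideanSpace ℝ (Fin d)) :
    ∃ K η₀ : ℝ, 0 < K ∧ 0 < η₀ ∧ ∀ η ∈ Set.Ioc (0 : ℝ) η₀,
      IsUnit ((1 : Matrix (Fin d) (Fin d) ℝ) - η • A) ∧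
      ‖Matrix.toEuclideanLin (exp (η • A + (η ^ 2 / 2) • (A * A))) μ₀
          - Matrix.toEuclideanLin ((1 : Matrix (Fin d) (Fin d) ℝ) - η • A)⁻¹ μ₀‖
        ≤ K * η ^ 3 := by
  let _ := Matrix.linftyOpNormedRing (n := Fin d) (α := ℝ)
  let _ := Matrix.linftyOpNormedAlgebra (n := Fin d) (R := ℝ) (α := ℝ)
  have hunit : ∀ᶠ η in 𝓝 (0 : ℝ), IsUnit ((1 : Matrix (Fin d) (Fin d) ℝ) - η • A) :=
    (by fun_prop : Continuous fun η : ℝ => (1 : Matrix (Fin d) (Fin d) ℝ) - η • A).continuousAt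
      |>.eventually (Units.isOpen.mem_nhds (by simp))
  let applyAt : Matrix (Fin d) (Fin d) ℝ →L[ℝ] EuclideanSpace ℝ (Fin d) :=
    LinearMap.toContinuousLinearMap (LinearMap.applyₗ μ₀ ∘ₗ Matrix.toEuclideanLin.toLinearMap)
  obtain ⟨K, η₀, hK, hη₀, h⟩ := exists_pos_bound_on_Ioc_of_isBigO hunit
    ((applyAt.isBigO_comp _ _).trans (exp_modifiedFlow_sub_inverse_isBigO A))
  refine ⟨K, η₀, hK, hη₀, fun η hη => ⟨(h η hη).1, ?_⟩⟩
  rw [Matrix.nonsing_inv_eq_ringInverse, ← LinearMap.sub_apply, ← map_sub]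
  exact (h η hη).2

/-- **Second-order matching of the JKO mean update in Bures–Wasserstein space.**
For the linear Fokker–Planck equation with drift `A`, the analytic JKO mean update
`μ_JKO(η) = (I − ηA)⁻¹μ₀` is matched to `O(η³)` by the second-order modified flow
`μ(η) = exp(ηA + (η²/2)A²)μ₀`. -/
theorem jko_mean_second_order_matching
    (d : ℕ) (hd : 1 ≤ d) (A : Matrix (Fin d) (Fin d) ℝ)
    (μ₀ : EuclideanSpace ℝ (Fin d)) :
    ∃ K η₀ : ℝ, 0 < K ∧ 0 < η₀ ∧ ∀ η ∈ Set.Ioc (0 : ℝ) η₀,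
      IsUnit ((1 : Matrix (Fin d) (Fin d) ℝ) - η • A) ∧
      ‖Matrix.toEuclideanLin (exp (η • A + (η ^ 2 / 2) • (A * A))) μ₀
          - Matrix.toEuclideanLin ((1 : Matrix (Fin d) (Fin d) ℝ) - η • A)⁻¹ μ₀‖
        ≤ K * η ^ 3 :=
  jko_mean_second_order_matching_general d A μ₀
end

section
/- Let d ≥ 1, let ρ : ℝ^d → ℝ be smooth and strictly positive with ∫ ‖∇ log ρ(x)‖² ρ(x) dx < ∞, and let φ : ℝ^d → ℝ be smooth with compact support. Then for all real s with |s| small enough that ρ + sφ > 0 on the support of φ, the Fisher information I(ρ + sφ) = ∫ ‖∇ log(ρ + sφ)(x)‖² (ρ + sφ)(x) dx is finite, the map s ↦ I(ρ + sφ) is differentiable at s = 0, and its derivative at 0 equals −∫ φ(x) ( ‖∇ log ρ(x)‖² + 2 Δ log ρ(x) ) dx. Equivalently, the first variation of the Fisher information functional at ρ is −‖∇ log ρ‖² − 2Δ log ρ = −4 Δ(√ρ)/√ρ. -/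
open MeasureTheory

/-- The Laplacian of `f : ℝ^d → ℝ`, as the trace of the Hessian (the derivative of the
gradient field). -/
noncomputable def laplacian {d : ℕ} (f : EuclideanSpace ℝ (Fin d) → ℝ)
    (x : EuclideanSpace ℝ (Fin d)) : ℝ :=
  LinearMap.trace ℝ (EuclideanSpace ℝ (Fin d))
    ((fderiv ℝ (gradient f) x : EuclideanSpace ℝ (Fin d) →ₗ[ℝ] EuclideanSpace ℝ (Fin d)))

section Helpers

open InnerProductSpace Set

variable {d : ℕ}

lemma FV_laplacian_def (f : EuclideanSpace ℝ (Fin d) → ℝ) (x : EuclideanSpace ℝ (Fin d)) :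
    laplacian f x = LinearMap.trace ℝ (EuclideanSpace ℝ (Fin d))
      ((fderiv ℝ (gradient f) x : EuclideanSpace ℝ (Fin d) →L[ℝ] EuclideanSpace ℝ (Fin d))
        : EuclideanSpace ℝ (Fin d) →ₗ[ℝ] EuclideanSpace ℝ (Fin d)) := rfl

lemma FV_inner_gradient (f : EuclideanSpace ℝ (Fin d) → ℝ) (x v : EuclideanSpace ℝ (Fin d)) :
    (inner ℝ (gradient f x) v : ℝ) = fderiv ℝ f x v := by
  rw [gradient]; exact toDual_symm_apply

lemma FV_contDiff_gradient (n : ℕ∞) (f : EuclideanSpace ℝ (Fin d) → ℝ) (hf : ContDiff ℝ (⊤ : ℕ∞) f) :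
    ContDiff ℝ n (gradient f) :=
  (toDual ℝ (EuclideanSpace ℝ (Fin d))).symm.contDiff.comp (hf.fderiv_right (by exact_mod_cast (le_top : n + 1 ≤ ⊤)))

lemma FV_gradient_comp_hasDerivAt {g : EuclideanSpace ℝ (Fin d) → ℝ} {q : ℝ → ℝ} {c : ℝ}
    (x : EuclideanSpace ℝ (Fin d))
    (hg : DifferentiableAt ℝ g x) (hq : HasDerivAt q c (g x)) :
    gradient (fun y => q (g y)) x = c • gradient g x := by
  have h2 : HasFDerivAt (fun y => q (g y)) (c • fderiv ℝ g x) x :=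
    hq.comp_hasFDerivAt x hg.hasFDerivAt
  rw [h2.hasGradientAt.gradient, _root_.map_smul, gradient]

lemma FV_gradient_log {g : EuclideanSpace ℝ (Fin d) → ℝ} (x : EuclideanSpace ℝ (Fin d))
    (hg : DifferentiableAt ℝ g x) (h : 0 < g x) :
    gradient (fun y => Real.log (g y)) x = (g x)⁻¹ • gradient g x :=
  FV_gradient_comp_hasDerivAt x hg (Real.hasDerivAt_log h.ne')

lemma FV_gradient_sqrt {g : EuclideanSpace ℝ (Fin d) → ℝ} (x : EuclideanSpace ℝ (Fin d))
    (hg : DifferentiableAt ℝ g x) (h : 0 < g x) :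
    gradient (fun y => Real.sqrt (g y)) x = (2 * Real.sqrt (g x))⁻¹ • gradient g x := by
  have := FV_gradient_comp_hasDerivAt x hg (Real.hasDerivAt_sqrt h.ne')
  rwa [one_div] at this

lemma FV_gradient_add_smul {ρ φ : EuclideanSpace ℝ (Fin d) → ℝ} (s : ℝ)
    (x : EuclideanSpace ℝ (Fin d))
    (hρ : DifferentiableAt ℝ ρ x) (hφ : DifferentiableAt ℝ φ x) :
    gradient (fun y => ρ y + s * φ y) x = gradient ρ x + s • gradient φ x := by
  have h2 : HasFDerivAt (fun y => ρ y + s * φ y)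
      (fderiv ℝ ρ x + s • fderiv ℝ φ x) x :=
    (hρ.hasFDerivAt).add ((hφ.hasFDerivAt).const_smul s)
  rw [h2.hasGradientAt.gradient, map_add, _root_.map_smul, gradient, gradient]

lemma FV_gradient_eq_zero_of_nmem (f : EuclideanSpace ℝ (Fin d) → ℝ)
    {x : EuclideanSpace ℝ (Fin d)} (h : x ∉ tsupport f) : gradient f x = 0 := by
  have hz : fderiv ℝ f x = 0 := by
    by_contra h'
    exact h (support_fderiv_subset ℝ (Function.mem_support.2 h'))
  rw [gradient, hz, map_zero]

lemma FV_trace_eq_sum (A : EuclideanSpace ℝ (Fin d) →L[ℝ] EuclideanSpace ℝ (Fin d)) :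
    LinearMap.trace ℝ (EuclideanSpace ℝ (Fin d)) (A : _ →ₗ[ℝ] _)
      = ∑ i, A (EuclideanSpace.single i 1) i := by
  classical
  rw [LinearMap.trace_eq_matrix_trace ℝ (EuclideanSpace.basisFun (Fin d) ℝ).toBasis]
  simp [Matrix.trace, Matrix.diag, LinearMap.toMatrix_apply]

lemma FV_single_sum (v : EuclideanSpace ℝ (Fin d)) :
    v = ∑ i, v i • EuclideanSpace.single i 1 := by
  classical
  ext j
  have : (∑ i, v i • EuclideanSpace.single i 1 : EuclideanSpace ℝ (Fin d)) j
      = ∑ i, (v i • EuclideanSpace.single i (1:ℝ) : EuclideanSpace ℝ (Fin d)) j :=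
    by rw [WithLp.ofLp_sum, Finset.sum_apply]
  rw [this]
  simp [EuclideanSpace.single_apply]

lemma FV_trace_smulRight (L : EuclideanSpace ℝ (Fin d) →L[ℝ] ℝ) (v : EuclideanSpace ℝ (Fin d)) :
    LinearMap.trace ℝ (EuclideanSpace ℝ (Fin d)) ((L.smulRight v : _ →L[ℝ] _) : _ →ₗ[ℝ] _)
      = L v := by
  classical
  rw [FV_trace_eq_sum]
  have h : ∀ i ∈ Finset.univ, (L.smulRight v) (EuclideanSpace.single i (1:ℝ)) i
      = v i * L (EuclideanSpace.single i 1) := by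
    intro i _; simp [ContinuousLinearMap.smulRight_apply, mul_comm]
  rw [Finset.sum_congr rfl h]
  conv_rhs => rw [FV_single_sum v]
  rw [map_sum]
  simp [mul_comm]

lemma FV_trace_fderiv_smul (u : EuclideanSpace ℝ (Fin d) → ℝ)
    (V : EuclideanSpace ℝ (Fin d) → EuclideanSpace ℝ (Fin d)) (x : EuclideanSpace ℝ (Fin d))
    (hu : DifferentiableAt ℝ u x) (hV : DifferentiableAt ℝ V x) :
    LinearMap.trace ℝ (EuclideanSpace ℝ (Fin d))
        ((fderiv ℝ (fun y => u y • V y) x : _ →L[ℝ] _) : _ →ₗ[ℝ] _)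
      = u x * LinearMap.trace ℝ (EuclideanSpace ℝ (Fin d))
          ((fderiv ℝ V x : _ →L[ℝ] _) : _ →ₗ[ℝ] _)
        + fderiv ℝ u x (V x) := by
  have h : HasFDerivAt (fun y => u y • V y)
      (u x • fderiv ℝ V x + (fderiv ℝ u x).smulRight (V x)) x :=
    hu.hasFDerivAt.smul hV.hasFDerivAt
  rw [h.fderiv]
  push_cast [ContinuousLinearMap.coe_add, ContinuousLinearMap.coe_smul]
  rw [map_add, _root_.map_smul, FV_trace_smulRight]
  simp [smul_eq_mul]

lemma FV_laplacian_of_gradient_eq {f u Fn : EuclideanSpace ℝ (Fin d) → ℝ}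
    (x : EuclideanSpace ℝ (Fin d)) (hf : ContDiff ℝ (⊤ : ℕ∞) f) (hu : DifferentiableAt ℝ u x)
    (h : gradient Fn = fun y => u y • gradient f y) :
    laplacian Fn x = u x * laplacian f x + inner ℝ (gradient u x) (gradient f x) := by
  rw [FV_laplacian_def, h, FV_trace_fderiv_smul u (gradient f) x hu
    ((FV_contDiff_gradient 1 f hf).differentiable one_ne_zero x), ← FV_laplacian_def,
    FV_inner_gradient]

lemma FV_continuous_laplacian (f : EuclideanSpace ℝ (Fin d) → ℝ) (hf : ContDiff ℝ (⊤ : ℕ∞) f) :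
    Continuous (laplacian f) := by
  have h1 : Continuous (fderiv ℝ (gradient f)) :=
    (FV_contDiff_gradient ⊤ f hf).continuous_fderiv (by norm_num)
  set tr : (EuclideanSpace ℝ (Fin d) →L[ℝ] EuclideanSpace ℝ (Fin d)) →ₗ[ℝ] ℝ :=
    (LinearMap.trace ℝ (EuclideanSpace ℝ (Fin d))).comp
      (ContinuousLinearMap.coeLM ℝ) with htr
  have h2 : Continuous tr := tr.continuous_of_finiteDimensional
  exact h2.comp h1

lemma FV_pi_divergence_zero {n : ℕ} (g : (Fin (n+1) → ℝ) → (Fin (n+1) → ℝ))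
    (hg : ContDiff ℝ 1 g) (hc : HasCompactSupport g) :
    ∫ x, ∑ i, fderiv ℝ g x (Pi.single i 1) i = 0 := by
  obtain ⟨r, hr⟩ : ∃ r : ℝ, tsupport g ⊆ Metric.ball 0 r :=
    hc.isBounded.subset_ball 0
  set R : ℝ := max r 1 with hR
  have hrR : r ≤ R := le_max_left _ _
  have hR1 : (0:ℝ) < R := lt_of_lt_of_le one_pos (le_max_right _ _)
  set a : Fin (n+1) → ℝ := fun _ => -R
  set b : Fin (n+1) → ℝ := fun _ => R
  have hle : a ≤ b := fun i => by simp only [a, b]; linarith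
  have hdiff : Differentiable ℝ g := hg.differentiable one_ne_zero
  have hcont : Continuous fun x => ∑ i, fderiv ℝ g x (Pi.single i 1) i := by
    apply continuous_finset_sum
    intro i _
    exact (continuous_apply i).comp
      ((ContinuousLinearMap.apply ℝ _ (Pi.single i 1)).continuous.comp
        (hg.continuous_fderiv one_ne_zero))
  have hsupp : ∀ x : Fin (n+1) → ℝ, x ∉ Metric.ball (0 : Fin (n+1) → ℝ) r →
      g x = 0 ∧ fderiv ℝ g x = 0 := by
    intro x hx
    have hxt : x ∉ tsupport g := fun h => hx (hr h)
    refine ⟨image_eq_zero_of_notMem_tsupport hxt, ?_⟩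
    by_contra h
    exact hxt (support_fderiv_subset ℝ (Function.mem_support.2 h))
  have key := integral_divergence_of_hasFDerivAt_off_countable (a := a) (b := b) hle g
    (fun x => fderiv ℝ g x) ∅ countable_empty
    (hg.continuous.continuousOn)
    (fun x _ => (hdiff x).hasFDerivAt)
    (hcont.continuousOn.integrableOn_compact isCompact_Icc)
  -- faces vanish
  have hface : ∀ (i : Fin (n+1)) (c : ℝ), |c| = R →
      ∀ x : Fin n → ℝ, g (Fin.insertNth (α := fun _ => ℝ) i c x) i = 0 := by
    intro i c hcR x
    set y : Fin (n+1) → ℝ := Fin.insertNth (α := fun _ => ℝ) i c x with hy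
    have hnorm : R ≤ ‖y‖ := by
      calc R = |c| := hcR.symm
        _ = ‖y i‖ := by rw [hy, Fin.insertNth_apply_same]; rfl
        _ ≤ ‖y‖ := norm_le_pi_norm _ i
    have : y ∉ Metric.ball (0 : Fin (n+1) → ℝ) r := by
      simp only [Metric.mem_ball, dist_zero_right, not_lt]
      linarith
    simpa using congrFun (hsupp _ this).1 i
  have hzero : ∀ (i : Fin (n+1)),
      ((∫ x in Icc (a ∘ Fin.succAbove i) (b ∘ Fin.succAbove i),
          g (Fin.insertNth i (b i) x) i)
        - ∫ x in Icc (a ∘ Fin.succAbove i) (b ∘ Fin.succAbove i),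
          g (Fin.insertNth i (a i) x) i) = 0 := by
    intro i
    have h1 : ∀ x : Fin n → ℝ, g (Fin.insertNth (α := fun _ => ℝ) i (b i) x) i = 0 :=
      hface i R (abs_of_pos hR1)
    have h2 : ∀ x : Fin n → ℝ, g (Fin.insertNth (α := fun _ => ℝ) i (a i) x) i = 0 := by
      have : |(-R)| = R := by rw [abs_neg, abs_of_pos hR1]
      exact hface i (-R) this
    simp only [h1, h2, integral_zero, sub_zero]
  rw [Finset.sum_eq_zero (fun i _ => hzero i)] at key
  -- extend the integral from the box to the whole space
  rw [← key]
  symm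
  apply setIntegral_eq_integral_of_forall_compl_eq_zero
  intro x hx
  have : x ∉ Metric.ball (0 : Fin (n+1) → ℝ) r := by
    intro hmem
    apply hx
    simp only [Metric.mem_ball, dist_zero_right] at hmem
    have : ∀ i, |x i| ≤ ‖x‖ := fun i => norm_le_pi_norm x i
    refine Set.mem_Icc.2 ⟨fun i => ?_, fun i => ?_⟩ <;>
      [skip; skip] <;>
      · have := abs_le.1 (le_trans (this i) (le_of_lt (lt_of_lt_of_le hmem hrR)))
        simp only [a, b]
        first
        | exact this.1
        | exact this.2
  simp only [(hsupp x this).2]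
  simp

lemma FV_euclidean_divergence_zero (hd : 1 ≤ d) (W : (EuclideanSpace ℝ (Fin d)) → EuclideanSpace ℝ (Fin d))
    (hW : ContDiff ℝ 1 W) (hc : HasCompactSupport W) :
    ∫ x, LinearMap.trace ℝ (EuclideanSpace ℝ (Fin d)) ((fderiv ℝ W x : _ →L[ℝ] _) : _ →ₗ[ℝ] _) = 0 := by
  obtain ⟨n, rfl⟩ : ∃ n, d = n + 1 := ⟨d - 1, (Nat.succ_pred_eq_of_pos hd).symm⟩
  set eq : EuclideanSpace ℝ (Fin (n+1)) ≃L[ℝ] (Fin (n+1) → ℝ) :=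
    (EuclideanSpace.equiv (Fin (n+1)) ℝ) with heq
  set g : (Fin (n+1) → ℝ) → (Fin (n+1) → ℝ) := fun y => eq (W (eq.symm y)) with hgdef
  have hg : ContDiff ℝ 1 g :=
    (eq.contDiff.comp hW).comp eq.symm.contDiff
  have hgc : HasCompactSupport g := by
    have h1 : HasCompactSupport (fun x => eq (W x)) := hc.comp_left (map_zero eq)
    exact h1.comp_homeomorph eq.symm.toHomeomorph
  have hpi := FV_pi_divergence_zero g hg hgc
  have hT := EuclideanSpace.volume_preserving_symm_measurableEquiv_toLp (Fin (n+1))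
  -- fderiv of g
  have hWd : Differentiable ℝ W := hW.differentiable one_ne_zero
  have hfg : ∀ y : (Fin (n+1) → ℝ), fderiv ℝ g y =
      ((eq : _ →L[ℝ] _).comp ((fderiv ℝ W (eq.symm y)).comp (eq.symm : _ →L[ℝ] _))) := by
    intro y
    have h1 : HasFDerivAt W (fderiv ℝ W (eq.symm y)) (eq.symm y) := (hWd _).hasFDerivAt
    have h2 : HasFDerivAt g
        ((eq : _ →L[ℝ] _).comp ((fderiv ℝ W (eq.symm y)).comp (eq.symm : _ →L[ℝ] _))) y := by
      have := (eq.hasFDerivAt (x := W (eq.symm y))).comp y (h1.comp y (eq.symm.hasFDerivAt (x := y)))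
      rw [← ContinuousLinearMap.comp_assoc] at this
      exact this
    exact h2.fderiv
  have hdiv : ∀ y : (Fin (n+1) → ℝ),
      ∑ i, fderiv ℝ g y (Pi.single i 1) i
        = LinearMap.trace ℝ (EuclideanSpace ℝ (Fin (n+1)))
            ((fderiv ℝ W (eq.symm y) : _ →L[ℝ] _) : _ →ₗ[ℝ] _) := by
    intro y
    rw [FV_trace_eq_sum]
    apply Finset.sum_congr rfl
    intro i _
    rw [hfg y]
    have h3 : (eq.symm (Pi.single i 1) : EuclideanSpace ℝ (Fin (n+1))) = EuclideanSpace.single i 1 := by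
      ext j
      simp [heq, EuclideanSpace.single_apply, Pi.single_apply]
    simp only [ContinuousLinearMap.comp_apply, ContinuousLinearEquiv.coe_coe]
    rw [h3]
    rfl
  have := hT.integral_comp (MeasurableEquiv.toLp 2 (Fin (n+1) → ℝ)).symm.measurableEmbedding
    (fun y => LinearMap.trace ℝ (EuclideanSpace ℝ (Fin (n+1)))
      ((fderiv ℝ W (eq.symm y) : _ →L[ℝ] _) : _ →ₗ[ℝ] _))
  have h5 : ∫ (y : Fin (n + 1) → ℝ), (LinearMap.trace ℝ (EuclideanSpace ℝ (Fin (n+1))))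
      ((fderiv ℝ W (eq.symm y) : _ →L[ℝ] _) : _ →ₗ[ℝ] _) = 0 := by
    rw [← hpi]
    exact integral_congr_ae (Filter.Eventually.of_forall (fun y => (hdiv y).symm))
  rw [← h5, ← this]
  rfl


lemma FV_supported_integrable {φ : EuclideanSpace ℝ (Fin d) → ℝ}
    (hφc : HasCompactSupport φ) (h : EuclideanSpace ℝ (Fin d) → ℝ)
    (hcont : Continuous h) (hsupp : ∀ x ∉ tsupport φ, h x = 0) :
    Integrable h := by
  refine hcont.integrable_of_hasCompactSupport (HasCompactSupport.intro hφc ?_)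
  exact hsupp

lemma FV_ibp (hd : 1 ≤ d) (f φ : EuclideanSpace ℝ (Fin d) → ℝ)
    (hf : ContDiff ℝ (⊤ : ℕ∞) f) (hφ : ContDiff ℝ (⊤ : ℕ∞) φ) (hφc : HasCompactSupport φ) :
    ∫ x, (inner ℝ (gradient φ x) (gradient f x) : ℝ) = - ∫ x, φ x * laplacian f x := by
  classical
  set W : EuclideanSpace ℝ (Fin d) → EuclideanSpace ℝ (Fin d) :=
    fun x => φ x • gradient f x with hW
  have hgf : ContDiff ℝ (⊤ : ℕ∞) (gradient f) := FV_contDiff_gradient ⊤ f hf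
  have hW1 : ContDiff ℝ 1 W := (hφ.of_le (by simp)).smul (hgf.of_le (by simp))
  have hWc : HasCompactSupport W := by
    refine HasCompactSupport.intro hφc ?_
    intro x hx
    simp [hW, image_eq_zero_of_notMem_tsupport hx]
  have h0 := FV_euclidean_divergence_zero hd W hW1 hWc
  have hpt : ∀ x, LinearMap.trace ℝ (EuclideanSpace ℝ (Fin d))
      ((fderiv ℝ W x : _ →L[ℝ] _) : _ →ₗ[ℝ] _)
      = φ x * laplacian f x + inner ℝ (gradient φ x) (gradient f x) := by
    intro x
    rw [hW]
    rw [FV_trace_fderiv_smul φ (gradient f) x (hφ.differentiable (by simp) x)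
      (hgf.differentiable (by simp) x), ← FV_laplacian_def, FV_inner_gradient]
  have hlap : Continuous (laplacian f) := FV_continuous_laplacian f hf
  have hI1 : Integrable (fun x => φ x * laplacian f x) := by
    refine FV_supported_integrable hφc _ ((hφ.continuous).mul hlap) ?_
    intro x hx; simp [image_eq_zero_of_notMem_tsupport hx]
  have hI2 : Integrable (fun x => (inner ℝ (gradient φ x) (gradient f x) : ℝ)) := by
    refine FV_supported_integrable hφc _
      ((FV_contDiff_gradient 0 φ hφ).continuous.inner hgf.continuous) ?_
    intro x hx; simp [FV_gradient_eq_zero_of_nmem φ hx]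
  have heq : ∫ x, (φ x * laplacian f x + inner ℝ (gradient φ x) (gradient f x) : ℝ) = 0 := by
    rw [← h0]
    exact integral_congr_ae (Filter.Eventually.of_forall (fun x => (hpt x).symm))
  rw [integral_add hI1 hI2] at heq
  linarith

end Helpers
set_option maxHeartbeats 2000000 in
/-- **First variation of the Fisher information functional.**
For smooth positive `ρ` with finite Fisher information and smooth compactly supported `φ`,
`s ↦ I(ρ + sφ)` is finite for small `|s|`, differentiable at `0`, with derivative
`−∫ φ(‖∇log ρ‖² + 2Δ log ρ)`; equivalently the first variation at `ρ` is
`−‖∇log ρ‖² − 2Δ log ρ = −4Δ(√ρ)/√ρ`. -/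
theorem fisher_information_first_variation
    (d : ℕ) (hd : 1 ≤ d)
    (ρ : EuclideanSpace ℝ (Fin d) → ℝ) (hρ : ContDiff ℝ (⊤ : ℕ∞) ρ) (hpos : ∀ x, 0 < ρ x)
    (hfin : Integrable (fun x => ‖gradient (fun y => Real.log (ρ y)) x‖ ^ 2 * ρ x))
    (φ : EuclideanSpace ℝ (Fin d) → ℝ) (hφ : ContDiff ℝ (⊤ : ℕ∞) φ)
    (hφc : HasCompactSupport φ) :
    ∃ ε : ℝ, 0 < ε ∧
      (∀ s : ℝ, |s| < ε →
        (∀ x ∈ tsupport φ, 0 < ρ x + s * φ x) ∧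
        Integrable (fun x =>
          ‖gradient (fun y => Real.log (ρ y + s * φ y)) x‖ ^ 2 * (ρ x + s * φ x))) ∧
      HasDerivAt
        (fun s : ℝ => ∫ x,
          ‖gradient (fun y => Real.log (ρ y + s * φ y)) x‖ ^ 2 * (ρ x + s * φ x))
        (-∫ x, φ x * (‖gradient (fun y => Real.log (ρ y)) x‖ ^ 2
            + 2 * laplacian (fun y => Real.log (ρ y)) x))
        0 ∧
      (∀ x, -(‖gradient (fun y => Real.log (ρ y)) x‖ ^ 2
            + 2 * laplacian (fun y => Real.log (ρ y)) x)
          = -4 * laplacian (fun y => Real.sqrt (ρ y)) x / Real.sqrt (ρ x)) := by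
  classical
  have hρd : Differentiable ℝ ρ := hρ.differentiable (by simp)
  have hφd : Differentiable ℝ φ := hφ.differentiable (by simp)
  set V : EuclideanSpace ℝ (Fin d) → EuclideanSpace ℝ (Fin d) := gradient ρ with hV
  set Wg : EuclideanSpace ℝ (Fin d) → EuclideanSpace ℝ (Fin d) := gradient φ with hWg
  have hVc : Continuous V := (FV_contDiff_gradient 0 ρ hρ).continuous
  have hWc : Continuous Wg := (FV_contDiff_gradient 0 φ hφ).continuous
  have hWsupp : ∀ x ∉ tsupport φ, Wg x = 0 := fun x hx => FV_gradient_eq_zero_of_nmem φ hx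
  set L : EuclideanSpace ℝ (Fin d) → ℝ := fun y => Real.log (ρ y) with hLdef
  have hL : ContDiff ℝ (⊤ : ℕ∞) L := hρ.log (fun x => (hpos x).ne')
  have hgradL : ∀ x, gradient L x = (ρ x)⁻¹ • V x :=
    fun x => FV_gradient_log x (hρd x) (hpos x)
  have hgradLc : Continuous (gradient L) := (FV_contDiff_gradient 0 L hL).continuous
  -- global positivity for small `s`
  obtain ⟨ε, hεpos, hglob⟩ :
      ∃ ε : ℝ, 0 < ε ∧ ∀ s : ℝ, |s| < ε → ∀ x, 0 < ρ x + s * φ x := by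
    rcases Set.eq_empty_or_nonempty (tsupport φ) with hK | hK
    · refine ⟨1, one_pos, fun s _ x => ?_⟩
      have hx : φ x = 0 := image_eq_zero_of_notMem_tsupport (by simp [hK])
      simpa [hx] using hpos x
    · obtain ⟨x₀, hx₀K, hmin⟩ := hφc.exists_isMinOn hK hρ.continuous.continuousOn
      obtain ⟨x₁, hx₁K, hmax⟩ :=
        hφc.exists_isMaxOn hK (continuous_abs.comp hφ.continuous).continuousOn
      refine ⟨ρ x₀ / (|φ x₁| + 1), div_pos (hpos x₀) (by positivity), fun s hs x => ?_⟩
      by_cases hx : x ∈ tsupport φ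
      · have h1 : ρ x₀ ≤ ρ x := hmin hx
        have h2 : |φ x| ≤ |φ x₁| := hmax hx
        have h3 : |s * φ x| ≤ |s| * |φ x₁| := by
          rw [abs_mul]; exact mul_le_mul_of_nonneg_left h2 (abs_nonneg s)
        have h5 : |s| * (|φ x₁| + 1) < ρ x₀ := (lt_div_iff₀ (by positivity)).1 hs
        nlinarith [neg_abs_le (s * φ x), abs_nonneg s]
      · have hx0 : φ x = 0 := image_eq_zero_of_notMem_tsupport hx
        simpa [hx0] using hpos x
  -- the explicit form of the integrand
  set Ff : ℝ → EuclideanSpace ℝ (Fin d) → ℝ :=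
    fun s x => ‖V x + s • Wg x‖ ^ 2 / (ρ x + s * φ x) with hFf
  have hrw : ∀ s : ℝ, (∀ x, 0 < ρ x + s * φ x) → ∀ x,
      ‖gradient (fun y => Real.log (ρ y + s * φ y)) x‖ ^ 2 * (ρ x + s * φ x) = Ff s x := by
    intro s hs x
    have hdx : DifferentiableAt ℝ (fun y => ρ y + s * φ y) x :=
      (hρd x).add ((hφd x).const_mul s)
    have h1 : gradient (fun y => Real.log (ρ y + s * φ y)) x
        = (ρ x + s * φ x)⁻¹ • (V x + s • Wg x) := by
      rw [FV_gradient_log x hdx (hs x), FV_gradient_add_smul s x (hρd x) (hφd x)]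
    rw [h1, norm_smul, Real.norm_eq_abs, abs_of_pos (inv_pos.2 (hs x)), mul_pow]
    field_simp [hFf]
    rfl
  have hrw0 : ∀ x, ‖gradient (fun y => Real.log (ρ y)) x‖ ^ 2 * ρ x = Ff 0 x := by
    intro x
    have h0 : ∀ y, (0:ℝ) < ρ y + 0 * φ y := by intro y; simpa using hpos y
    have := hrw 0 h0 x
    have hfun : (fun y => Real.log (ρ y + 0 * φ y)) = fun y => Real.log (ρ y) := by
      funext y; norm_num
    rw [hfun] at this
    simpa using this
  -- integrability
  have hF0int : Integrable (Ff 0) := hfin.congr (Filter.Eventually.of_forall hrw0)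
  have hFcont : ∀ s : ℝ, (∀ x, 0 < ρ x + s * φ x) → Continuous (Ff s) := by
    intro s hs
    exact ((hVc.add (hWc.const_smul s)).norm.pow 2).div
      (hρ.continuous.add (continuous_const.mul hφ.continuous)) (fun x => (hs x).ne')
  have hGsupp : ∀ s : ℝ, ∀ x ∉ tsupport φ, Ff s x - Ff 0 x = 0 := by
    intro s x hx
    have h1 : φ x = 0 := image_eq_zero_of_notMem_tsupport hx
    have h2 : Wg x = 0 := hWsupp x hx
    simp [hFf, h1, h2]
  have hGint : ∀ s : ℝ, (∀ x, 0 < ρ x + s * φ x) →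
      Integrable (fun x => Ff s x - Ff 0 x) := by
    intro s hs
    refine FV_supported_integrable hφc _
      ((hFcont s hs).sub (hFcont 0 (fun x => by simpa using hpos x))) (hGsupp s)
  have hFsint : ∀ s : ℝ, (∀ x, 0 < ρ x + s * φ x) → Integrable (Ff s) := by
    intro s hs
    have hfe : (fun x => Ff 0 x + (Ff s x - Ff 0 x)) = Ff s := by funext x; ring
    exact hfe ▸ (hF0int.add (hGint s hs))
  -- the derivative integrand
  set Fp : ℝ → EuclideanSpace ℝ (Fin d) → ℝ := fun s x =>
    (2 * (inner ℝ (V x + s • Wg x) (Wg x) : ℝ) * (ρ x + s * φ x)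
      - ‖V x + s • Wg x‖ ^ 2 * φ x) / (ρ x + s * φ x) ^ 2 with hFp
  have hFpsupp : ∀ s : ℝ, ∀ x ∉ tsupport φ, Fp s x = 0 := by
    intro s x hx
    have h1 : φ x = 0 := image_eq_zero_of_notMem_tsupport hx
    have h2 : Wg x = 0 := hWsupp x hx
    simp [hFp, h1, h2]
  have hdiff : ∀ (x : EuclideanSpace ℝ (Fin d)), ∀ s ∈ Metric.ball (0:ℝ) ε,
      HasDerivAt (fun t => Ff t x) (Fp s x) s := by
    intro x s hs
    rw [Metric.mem_ball, dist_zero_right, Real.norm_eq_abs] at hs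
    have hc : HasDerivAt (fun t : ℝ => V x + t • Wg x) (Wg x) s := by
      simpa using ((hasDerivAt_id s).smul_const (Wg x)).const_add (V x)
    have hnum : HasDerivAt (fun t : ℝ => ‖V x + t • Wg x‖ ^ 2)
        (2 * (inner ℝ (V x + s • Wg x) (Wg x) : ℝ)) s := by
      have h2 := hc.inner ℝ hc
      have h3 : (fun t : ℝ => (inner ℝ (V x + t • Wg x) (V x + t • Wg x) : ℝ))
          = fun t : ℝ => ‖V x + t • Wg x‖ ^ 2 := by
        funext t; rw [real_inner_self_eq_norm_sq]
      rw [h3] at h2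
      exact h2.congr_deriv (by rw [real_inner_comm]; ring)
    have hden : HasDerivAt (fun t : ℝ => ρ x + t * φ x) (φ x) s := by
      simpa using ((hasDerivAt_id s).mul_const (φ x)).const_add (ρ x)
    exact hnum.div hden (hglob s hs x).ne'
  -- bound on compact set
  obtain ⟨C0, hC0⟩ : ∃ C0 : ℝ, ∀ p ∈ (Set.Icc (-(ε/2)) (ε/2)) ×ˢ tsupport φ,
      ‖Fp p.1 p.2‖ ≤ C0 := by
    apply (isCompact_Icc.prod hφc).exists_bound_of_continuousOn
    apply ContinuousOn.div
    · apply Continuous.continuousOn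
      apply Continuous.sub
      · exact ((continuous_const.mul (((hVc.comp continuous_snd).add
          ((continuous_fst).smul (hWc.comp continuous_snd))).inner
            (hWc.comp continuous_snd)))).mul
          ((hρ.continuous.comp continuous_snd).add
            (continuous_fst.mul (hφ.continuous.comp continuous_snd)))
      · exact (((hVc.comp continuous_snd).add
          ((continuous_fst).smul (hWc.comp continuous_snd))).norm.pow 2).mul
          (hφ.continuous.comp continuous_snd)
    · exact (((hρ.continuous.comp continuous_snd).add
        (continuous_fst.mul (hφ.continuous.comp continuous_snd))).pow 2).continuousOn
    · rintro ⟨s, x⟩ ⟨hs, -⟩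
      have : |s| < ε := by
        rw [Set.mem_Icc] at hs
        have : |s| ≤ ε/2 := abs_le.2 hs
        linarith
      exact pow_ne_zero 2 (hglob s this x).ne'
  set bound : EuclideanSpace ℝ (Fin d) → ℝ :=
    (tsupport φ).indicator (fun _ => C0) with hbound
  have hboundint : Integrable bound := by
    rw [hbound, integrable_indicator_iff (isClosed_tsupport φ).measurableSet]
    exact integrableOn_const hφc.measure_lt_top.ne
  have hbound_le : ∀ (x : EuclideanSpace ℝ (Fin d)), ∀ s ∈ Metric.ball (0:ℝ) (ε/2),
      ‖Fp s x‖ ≤ bound x := by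
    intro x s hs
    rw [Metric.mem_ball, dist_zero_right, Real.norm_eq_abs] at hs
    by_cases hx : x ∈ tsupport φ
    · rw [hbound, Set.indicator_of_mem hx]
      exact hC0 (s, x) ⟨Set.mem_Icc.2 (abs_le.1 hs.le), hx⟩
    · rw [hbound, Set.indicator_of_notMem hx, hFpsupp s x hx]
      simp
  -- differentiate under the integral sign
  have hε2 : (0:ℝ) < ε/2 := by linarith
  have key := hasDerivAt_integral_of_dominated_loc_of_deriv_le (μ := volume)
    (F := fun s x => Ff s x - Ff 0 x) (F' := Fp) (x₀ := (0:ℝ)) (bound := bound) (Metric.ball_mem_nhds (0:ℝ) hε2)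
    ?_ ?_ ?_ ?_ hboundint ?_
  rotate_left
  · filter_upwards [Metric.ball_mem_nhds (0:ℝ) hεpos] with s hs
    rw [Metric.mem_ball, dist_zero_right, Real.norm_eq_abs] at hs
    exact ((hFcont s (hglob s hs)).sub
      (hFcont 0 (fun x => by simpa using hpos x))).aestronglyMeasurable
  · exact (integrable_zero _ ℝ volume).congr
      (Filter.Eventually.of_forall (fun x => (sub_self (Ff 0 x)).symm))
  · refine Continuous.aestronglyMeasurable ?_
    refine ((continuous_const.mul ((hVc.add (hWc.const_smul (0:ℝ))).inner hWc)).mul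
      (hρ.continuous.add (continuous_const.mul hφ.continuous))).sub
        (((hVc.add (hWc.const_smul (0:ℝ))).norm.pow 2).mul hφ.continuous) |>.div
      ((hρ.continuous.add (continuous_const.mul hφ.continuous)).pow 2)
      (fun x => pow_ne_zero 2 (by simpa using (hpos x).ne'))
  · exact Filter.Eventually.of_forall (fun x s hs => hbound_le x s hs)
  · refine Filter.Eventually.of_forall (fun x s hs => ?_)
    have hs' : s ∈ Metric.ball (0:ℝ) ε :=
      Metric.ball_subset_ball (by linarith) hs
    exact (hdiff x s hs').sub_const (Ff 0 x)
  obtain ⟨-, hderiv⟩ := key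
  -- identify the limit with the original function
  have hΦeq : ∀ s : ℝ, |s| < ε →
      (∫ x, ‖gradient (fun y => Real.log (ρ y + s * φ y)) x‖ ^ 2 * (ρ x + s * φ x))
        = (∫ x, Ff 0 x) + ∫ x, (Ff s x - Ff 0 x) := by
    intro s hs
    rw [← integral_add hF0int (hGint s (hglob s hs))]
    apply integral_congr_ae
    filter_upwards with x
    rw [hrw s (hglob s hs) x]; ring
  have hmain : HasDerivAt
      (fun s : ℝ => ∫ x,
        ‖gradient (fun y => Real.log (ρ y + s * φ y)) x‖ ^ 2 * (ρ x + s * φ x))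
      (∫ x, Fp 0 x) 0 := by
    have h1 : HasDerivAt (fun s : ℝ => (∫ x, Ff 0 x) + ∫ x, (Ff s x - Ff 0 x))
        (∫ x, Fp 0 x) 0 := hderiv.const_add _
    apply h1.congr_of_eventuallyEq
    filter_upwards [Metric.ball_mem_nhds (0:ℝ) hεpos] with s hs
    rw [Metric.mem_ball, dist_zero_right, Real.norm_eq_abs] at hs
    exact hΦeq s hs
  -- identify the derivative with the claimed value
  have hFp0 : ∀ x, Fp 0 x
      = 2 * (inner ℝ (Wg x) (gradient L x) : ℝ) - φ x * ‖gradient L x‖ ^ 2 := by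
    intro x
    have hρx := hpos x
    rw [hgradL x, real_inner_smul_right, norm_smul, Real.norm_eq_abs,
      abs_of_pos (inv_pos.2 hρx), mul_pow]
    simp only [hFp, zero_smul, add_zero, zero_mul, mul_zero]
    rw [real_inner_comm (V x) (Wg x)]
    field_simp
  have hI1int : Integrable (fun x => (inner ℝ (Wg x) (gradient L x) : ℝ)) := by
    refine FV_supported_integrable hφc _ (hWc.inner hgradLc) ?_
    intro x hx; rw [hWsupp x hx]; simp
  have hI2int : Integrable (fun x => φ x * ‖gradient L x‖ ^ 2) := by
    refine FV_supported_integrable hφc _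
      (hφ.continuous.mul (hgradLc.norm.pow 2)) ?_
    intro x hx; rw [image_eq_zero_of_notMem_tsupport hx]; simp
  have hI3int : Integrable (fun x => φ x * laplacian L x) := by
    refine FV_supported_integrable hφc _
      (hφ.continuous.mul (FV_continuous_laplacian L hL)) ?_
    intro x hx; rw [image_eq_zero_of_notMem_tsupport hx]; simp
  have hibp := FV_ibp hd L φ hL hφ hφc
  have hval : (∫ x, Fp 0 x)
      = -∫ x, φ x * (‖gradient L x‖ ^ 2 + 2 * laplacian L x) := by
    have h1 : (∫ x, Fp 0 x)
        = ∫ x, (2 * (inner ℝ (Wg x) (gradient L x) : ℝ) - φ x * ‖gradient L x‖ ^ 2) :=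
      integral_congr_ae (Filter.Eventually.of_forall hFp0)
    have h2 : (∫ x, (2 * (inner ℝ (Wg x) (gradient L x) : ℝ) - φ x * ‖gradient L x‖ ^ 2))
        = 2 * (∫ x, (inner ℝ (Wg x) (gradient L x) : ℝ)) - ∫ x, φ x * ‖gradient L x‖ ^ 2 := by
      rw [integral_sub (hI1int.const_mul 2) hI2int, integral_const_mul]
    have h3 : (∫ x, φ x * (‖gradient L x‖ ^ 2 + 2 * laplacian L x))
        = (∫ x, φ x * ‖gradient L x‖ ^ 2) + 2 * ∫ x, φ x * laplacian L x := by
      rw [← integral_const_mul, ← integral_add hI2int (hI3int.const_mul 2)]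
      apply integral_congr_ae
      filter_upwards with x
      ring
    rw [h1, h2, hibp, h3]
    ring
  -- pointwise identity with the square root Laplacian
  have hpt3 : ∀ x, -(‖gradient (fun y => Real.log (ρ y)) x‖ ^ 2
        + 2 * laplacian (fun y => Real.log (ρ y)) x)
      = -4 * laplacian (fun y => Real.sqrt (ρ y)) x / Real.sqrt (ρ x) := by
    intro x
    have hρx := hpos x
    set r := ρ x with hr
    set q := Real.sqrt r with hq
    have hqpos : 0 < q := Real.sqrt_pos.2 hρx
    have hq2 : q ^ 2 = r := Real.sq_sqrt hρx.le
    set T := laplacian ρ x with hT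
    set N := ‖V x‖ ^ 2 with hN
    -- laplacian of log ρ
    have hlapL : laplacian L x = r⁻¹ * T - (r^2)⁻¹ * N := by
      have hu : DifferentiableAt ℝ (fun y => (ρ y)⁻¹) x := (hρd x).inv hρx.ne'
      have h := FV_laplacian_of_gradient_eq x hρ hu (funext hgradL)
      rw [h]
      have hgu : gradient (fun y => (ρ y)⁻¹) x = (-(r^2)⁻¹) • V x := by
        have := FV_gradient_comp_hasDerivAt x (hρd x) (hasDerivAt_inv hρx.ne')
        simpa [hr] using this
      rw [hgu, real_inner_smul_left, real_inner_self_eq_norm_sq, ← hN]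
      ring
    -- laplacian of sqrt ρ
    have hq2' : HasDerivAt (fun t : ℝ => (2 * Real.sqrt t)⁻¹)
        (-(2 * (1 / (2 * q))) / (2 * q) ^ 2) r := by
      have h1 : HasDerivAt (fun t : ℝ => 2 * Real.sqrt t) (2 * (1 / (2 * q))) r :=
        (Real.hasDerivAt_sqrt hρx.ne').const_mul 2
      exact h1.inv (by positivity)
    have hu2 : DifferentiableAt ℝ (fun y => (2 * Real.sqrt (ρ y))⁻¹) x :=
      (hq2'.comp_hasFDerivAt x (hρd x).hasFDerivAt).differentiableAt
    have hgradS : gradient (fun y => Real.sqrt (ρ y)) =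
        fun y => (2 * Real.sqrt (ρ y))⁻¹ • V y :=
      funext (fun y => FV_gradient_sqrt y (hρd y) (hpos y))
    have hlapS : laplacian (fun y => Real.sqrt (ρ y)) x
        = (2 * q)⁻¹ * T + (-(2 * (1 / (2 * q))) / (2 * q) ^ 2) * N := by
      have h := FV_laplacian_of_gradient_eq (f := ρ)
        (u := fun y => (2 * Real.sqrt (ρ y))⁻¹)
        (Fn := fun y => Real.sqrt (ρ y)) x hρ hu2 hgradS
      rw [h]
      have hgu : gradient (fun y => (2 * Real.sqrt (ρ y))⁻¹) x
          = (-(2 * (1 / (2 * q))) / (2 * q) ^ 2) • V x :=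
        FV_gradient_comp_hasDerivAt x (hρd x) hq2'
      rw [hgu, real_inner_smul_left, real_inner_self_eq_norm_sq, ← hN]
    have hnormL : ‖gradient L x‖ ^ 2 = (r^2)⁻¹ * N := by
      rw [hgradL x, norm_smul, Real.norm_eq_abs, abs_of_pos (inv_pos.2 hρx), mul_pow, ← hN]
      field_simp
    show -(‖gradient L x‖ ^ 2 + 2 * laplacian L x)
        = -4 * laplacian (fun y => Real.sqrt (ρ y)) x / q
    rw [hnormL, hlapL, hlapS, ← hq2]
    field_simp
    ring
  exact ⟨ε, hεpos,
    fun s hs => ⟨fun x _ => hglob s hs x,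
      (hFsint s (hglob s hs)).congr
        (Filter.Eventually.of_forall (fun x => (hrw s (hglob s hs) x).symm))⟩,
    hval ▸ hmain,
    hpt3⟩
end

section
/- Let d ≥ 1, β > 0, η > 0, let E : ℝ^d → ℝ be twice continuously differentiable, let ρ : ℝ^d → ℝ be smooth and strictly positive with ∫ ‖∇E(x) + β^{-1}∇ log ρ(x)‖² ρ(x) dx < ∞, and let φ : ℝ^d → ℝ be smooth with compact support. Define, for |s| small enough that ρ + sφ > 0 on the support of φ, Hη(ρ + sφ) = (η/4) ∫ ‖∇E(x) + β^{-1} ∇ log(ρ + sφ)(x)‖² (ρ + sφ)(x) dx. Then s ↦ Hη(ρ + sφ) is differentiable at s = 0 with derivative ∫ φ(x) [ (η/4)‖∇E(x)‖² − (η/(2β)) ΔE(x) − (η/(4β²)) ( 2 Δ log ρ(x) + ‖∇ log ρ(x)‖² ) ] dx; that is, the first variation of the implicit bias of the JKO scheme on the free-energy functional is (η/4)‖∇E‖² − (η/(2β))ΔE − (η/(4β²))(2Δ log ρ + ‖∇ log ρ‖²). -/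
open MeasureTheory

open InnerProductSpace

variable {d : ℕ}

local notation "X" => EuclideanSpace ℝ (Fin d)

lemma gradient_of_hasFDerivAt {f : X → ℝ} {L : X →L[ℝ] ℝ} {x : X}
    (h : HasFDerivAt f L x) : gradient f x = (toDual ℝ X).symm L := by
  rw [gradient, h.fderiv]

lemma fderiv_apply_eq_inner {f : X → ℝ} {x w : X} :
    fderiv ℝ f x w = ⟪gradient f x, w⟫_ℝ := by
  rw [gradient, toDual_symm_apply]

-- Lemma A: integral of a directional derivative of a compactly supported C¹ fn is 0
lemma integral_fderiv_apply_eq_zero {f : X → ℝ} (hf : ContDiff ℝ 1 f)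
    (hc : HasCompactSupport f) (v : X) : ∫ x, fderiv ℝ f x v = 0 := by
  obtain ⟨R, hR0, hKR⟩ : ∃ R, 0 < R ∧ tsupport f ⊆ Metric.ball (0 : X) R := by
    obtain ⟨R, hR⟩ := hc.isBounded.subset_ball (0 : X)
    exact ⟨max R 1, lt_of_lt_of_le one_pos (le_max_right _ _),
      hR.trans (Metric.ball_subset_ball (le_max_left _ _))⟩
  set b : ContDiffBump (0 : X) := ⟨R, R + 1, hR0, by linarith⟩
  have hb1 : ∀ x ∈ Metric.ball (0 : X) R, b x = 1 := fun x hx =>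
    b.one_of_mem_closedBall (Metric.ball_subset_closedBall hx)
  have hbd : ∀ x ∈ tsupport f, fderiv ℝ (⇑b) x = 0 := by
    intro x hx
    have : (⇑b : X → ℝ) =ᶠ[nhds x] fun _ => 1 := by
      filter_upwards [Metric.isOpen_ball.mem_nhds (hKR hx)] with y hy using hb1 y hy
    rw [this.fderiv_eq, fderiv_fun_const]; rfl
  have hfd : ∀ x, x ∉ tsupport f → fderiv ℝ f x = 0 := by
    intro x hx
    have : f =ᶠ[nhds x] fun _ => 0 := by
      filter_upwards [(isClosed_tsupport f).isOpen_compl.mem_nhds hx] with y hy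
        using image_eq_zero_of_notMem_tsupport hy
    rw [this.fderiv_eq, fderiv_fun_const]; rfl
  have hbdiff : Differentiable ℝ (⇑b : X → ℝ) := by
    have := (b.contDiff (n := 1))
    exact this.differentiable (by simp)
  have key := integral_mul_fderiv_eq_neg_fderiv_mul_of_integrable
    (μ := (volume : Measure X)) (f := (⇑b : X → ℝ)) (g := f) (v := v)
    ?_ ?_ ?_ (fun x _ => hbdiff x) (fun x _ => hf.differentiable one_ne_zero x)
  · -- conclude
    have h1 : ∀ x, b x * fderiv ℝ f x v = fderiv ℝ f x v := by
      intro x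
      by_cases hx : x ∈ tsupport f
      · rw [hb1 x (hKR hx), one_mul]
      · rw [hfd x hx]; simp
    have h2 : ∀ x, fderiv ℝ (⇑b) x v * f x = 0 := by
      intro x
      by_cases hx : x ∈ tsupport f
      · rw [hbd x hx]; simp
      · rw [image_eq_zero_of_notMem_tsupport hx, mul_zero]
    simp only [h1, h2] at key
    simpa using key
  · -- Integrable (fderiv b v * f)
    apply Continuous.integrable_of_hasCompactSupport
    · exact (((b.contDiff (n:=1)).continuous_fderiv (by simp)).clm_apply continuous_const).mul
        hf.continuous
    · exact hc.mul_left
  · apply Continuous.integrable_of_hasCompactSupport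
    · exact b.continuous.mul ((hf.continuous_fderiv one_ne_zero).clm_apply continuous_const)
    · exact b.hasCompactSupport.mul_right
  · apply Continuous.integrable_of_hasCompactSupport
    · exact b.continuous.mul hf.continuous
    · exact hc.mul_left

lemma trace_clm_smulRight (L : X →L[ℝ] ℝ) (w : X) :
    LinearMap.trace ℝ X ((L.smulRight w : X →L[ℝ] X) : X →ₗ[ℝ] X) = L w := by
  classical
  set b := (EuclideanSpace.basisFun (Fin d) ℝ).toBasis
  rw [LinearMap.trace_eq_matrix_trace ℝ b]
  rw [Matrix.trace]
  have hdiag : ∀ i, (LinearMap.toMatrix b b ((L.smulRight w : X →L[ℝ] X) : X →ₗ[ℝ] X)).diag i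
      = L (b i) * w i := by
    intro i
    rw [Matrix.diag_apply, LinearMap.toMatrix_apply]
    simp [b, ContinuousLinearMap.smulRight_apply]
  rw [Finset.sum_congr rfl (fun i _ => hdiag i)]
  have : L w = L (∑ i, w i • b i) := by
    congr 1
    have := (EuclideanSpace.basisFun (Fin d) ℝ).sum_repr w
    simp only [EuclideanSpace.basisFun_repr] at this
    simpa [b] using this.symm
  rw [this, map_sum]
  simp [mul_comm]

lemma integral_trace_fderiv_eq_zero {u : X → X} (hu : ContDiff ℝ 1 u)
    (hc : HasCompactSupport u) :
    ∫ x, LinearMap.trace ℝ X ((fderiv ℝ u x : X →L[ℝ] X) : X →ₗ[ℝ] X) = 0 := by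
  classical
  set b := (EuclideanSpace.basisFun (Fin d) ℝ).toBasis with hb
  have htr : ∀ x, LinearMap.trace ℝ X ((fderiv ℝ u x : X →L[ℝ] X) : X →ₗ[ℝ] X)
      = ∑ i, fderiv ℝ (fun y => u y i) x (b i) := by
    intro x
    rw [LinearMap.trace_eq_matrix_trace ℝ b, Matrix.trace]
    apply Finset.sum_congr rfl
    intro i _
    rw [Matrix.diag_apply, LinearMap.toMatrix_apply]
    have : (fun y => u y i) = fun y => (EuclideanSpace.proj i) (u y) := rfl
    rw [this, fderiv_comp' x ((EuclideanSpace.proj (𝕜 := ℝ) i).hasFDerivAt.differentiableAt)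
      ((hu.differentiable one_ne_zero) x)]
    rw [ContinuousLinearMap.fderiv]
    simp [b, ContinuousLinearMap.fderiv]
  have hint : ∀ i : Fin d, Integrable (fun x => fderiv ℝ (fun y => u y i) x (b i)) := by
    intro i
    apply Continuous.integrable_of_hasCompactSupport
    · have hcomp : ContDiff ℝ 1 (fun y => u y i) :=
        (EuclideanSpace.proj (𝕜 := ℝ) i).contDiff.comp hu
      exact (hcomp.continuous_fderiv one_ne_zero).clm_apply continuous_const
    · apply HasCompactSupport.intro hc
      intro x hx
      have : (fun y => u y i) =ᶠ[nhds x] fun _ => 0 := by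
        filter_upwards [(isClosed_tsupport u).isOpen_compl.mem_nhds hx] with y hy
        rw [image_eq_zero_of_notMem_tsupport hy]; rfl
      rw [this.fderiv_eq, fderiv_fun_const]; rfl
  calc ∫ x, LinearMap.trace ℝ X ((fderiv ℝ u x : X →L[ℝ] X) : X →ₗ[ℝ] X)
      = ∫ x, ∑ i, fderiv ℝ (fun y => u y i) x (b i) := by simp_rw [htr]
    _ = ∑ i, ∫ x, fderiv ℝ (fun y => u y i) x (b i) :=
        integral_finset_sum _ (fun i _ => hint i)
    _ = 0 := by
      apply Finset.sum_eq_zero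
      intro i _
      apply integral_fderiv_apply_eq_zero
      · exact (EuclideanSpace.proj (𝕜 := ℝ) i).contDiff.comp hu
      · apply HasCompactSupport.intro hc
        intro x hx
        rw [image_eq_zero_of_notMem_tsupport hx]; rfl

lemma gradient_add_smul_fun {f g : X → ℝ} (s : ℝ) (hf : Differentiable ℝ f)
    (hg : Differentiable ℝ g) (x : X) :
    gradient (fun y => f y + s * g y) x = gradient f x + s • gradient g x := by
  have h : HasFDerivAt (fun y => f y + s * g y) (fderiv ℝ f x + s • fderiv ℝ g x) x :=
    ((hf x).hasFDerivAt).add (((hg x).hasFDerivAt).const_smul s)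
  rw [gradient_of_hasFDerivAt h, map_add, LinearIsometryEquiv.map_smul]
  rfl

lemma gradient_log_comp {f : X → ℝ} (hf : Differentiable ℝ f) (x : X) (hx : f x ≠ 0) :
    gradient (fun y => Real.log (f y)) x = (f x)⁻¹ • gradient f x := by
  have h : HasFDerivAt (fun y => Real.log (f y)) ((f x)⁻¹ • fderiv ℝ f x) x :=
    ((hf x).hasFDerivAt).log hx
  rw [gradient_of_hasFDerivAt h, LinearIsometryEquiv.map_smul]
  rfl

lemma contDiff_gradient {f : X → ℝ} {n m : WithTop ℕ∞} (hf : ContDiff ℝ n f) (hmn : m + 1 ≤ n) :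
    ContDiff ℝ m (gradient f) := by
  have h1 : ContDiff ℝ m (fderiv ℝ f) := hf.fderiv_right hmn
  have h2 : ContDiff ℝ m (fun x => (toDual ℝ X).symm (fderiv ℝ f x)) :=
    ((toDual ℝ X).symm.toContinuousLinearEquiv.toContinuousLinearMap.contDiff).comp h1
  exact h2

lemma key_algebra {Y : Type*} [NormedAddCommGroup Y] [InnerProductSpace ℝ Y]
    (Gv g q : Y) (r f a b β η : ℝ) (hr : r ≠ 0) (hβ : β ≠ 0) :
    f * ((η / 4) * ‖Gv‖ ^ 2 - (η / (2 * β)) * a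
        - (η / (4 * β ^ 2)) * (2 * b + ‖g‖ ^ 2))
    = (η / 4) * (((inner ℝ (Gv + β⁻¹ • g) ((β⁻¹ * r⁻¹) • q + (β⁻¹ * (-f / r ^ 2)) • (r • g)) : ℝ)
          + (inner ℝ ((β⁻¹ * r⁻¹) • q + (β⁻¹ * (-f / r ^ 2)) • (r • g)) (Gv + β⁻¹ • g) : ℝ)) * r
        + (inner ℝ (Gv + β⁻¹ • g) (Gv + β⁻¹ • g) : ℝ) * f)
      - (η / (2 * β)) * ((inner ℝ q (Gv + β⁻¹ • g) : ℝ) + f * (a + β⁻¹ * b)) := by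
  simp only [inner_add_left, inner_add_right, real_inner_smul_left, real_inner_smul_right]
  simp only [real_inner_self_eq_norm_sq]
  rw [real_inner_comm q Gv, real_inner_comm q g, real_inner_comm g Gv]
  field_simp
  ring

set_option maxHeartbeats 2000000 in
/-- **First variation of the implicit bias of JKO on the free-energy functional.**
For `Hη(ρ) = (η/4)∫‖∇E + β⁻¹∇log ρ‖²ρ`, the map `s ↦ Hη(ρ + sφ)` is differentiable at
`s = 0` with derivative
`∫ φ ((η/4)‖∇E‖² − (η/(2β))ΔE − (η/(4β²))(2Δ log ρ + ‖∇ log ρ‖²))`. -/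
theorem free_energy_implicit_bias_first_variation
    (d : ℕ) (hd : 1 ≤ d) (β η : ℝ) (hβ : 0 < β) (hη : 0 < η)
    (E : EuclideanSpace ℝ (Fin d) → ℝ) (hE : ContDiff ℝ 2 E)
    (ρ : EuclideanSpace ℝ (Fin d) → ℝ) (hρ : ContDiff ℝ (⊤ : ℕ∞) ρ) (hpos : ∀ x, 0 < ρ x)
    (hfin : Integrable (fun x =>
      ‖gradient E x + β⁻¹ • gradient (fun y => Real.log (ρ y)) x‖ ^ 2 * ρ x))
    (φ : EuclideanSpace ℝ (Fin d) → ℝ) (hφ : ContDiff ℝ (⊤ : ℕ∞) φ)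
    (hφc : HasCompactSupport φ) :
    HasDerivAt
      (fun s : ℝ => (η / 4) * ∫ x,
        ‖gradient E x + β⁻¹ • gradient (fun y => Real.log (ρ y + s * φ y)) x‖ ^ 2
          * (ρ x + s * φ x))
      (∫ x, φ x * ((η / 4) * ‖gradient E x‖ ^ 2 - (η / (2 * β)) * laplacian E x
          - (η / (4 * β ^ 2)) * (2 * laplacian (fun y => Real.log (ρ y)) x
              + ‖gradient (fun y => Real.log (ρ y)) x‖ ^ 2)))
      0 := by
  classical
  have hβ' : (β : ℝ) ≠ 0 := ne_of_gt hβ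
  -- basic regularity
  have hρ2 : ContDiff ℝ 2 ρ := hρ.of_le (WithTop.coe_le_coe.2 le_top)
  have hφ2 : ContDiff ℝ 2 φ := hφ.of_le (WithTop.coe_le_coe.2 le_top)
  have hρd : Differentiable ℝ ρ := hρ2.differentiable (by norm_num)
  have hφd : Differentiable ℝ φ := hφ2.differentiable (by norm_num)
  have hρne : ∀ x, ρ x ≠ 0 := fun x => ne_of_gt (hpos x)
  have hlog2 : ContDiff ℝ 2 (fun y => Real.log (ρ y)) := hρ2.log hρne
  set K := tsupport φ with hK
  have hKc : IsCompact K := hφc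
  set P : EuclideanSpace ℝ (Fin d) → EuclideanSpace ℝ (Fin d) := gradient ρ with hP
  set Q : EuclideanSpace ℝ (Fin d) → EuclideanSpace ℝ (Fin d) := gradient φ with hQ
  set G : EuclideanSpace ℝ (Fin d) → EuclideanSpace ℝ (Fin d) := gradient E with hG
  have hPc : Continuous P := (contDiff_gradient (m := 1) hρ2 (by norm_num)).continuous
  have hQc : Continuous Q := (contDiff_gradient (m := 1) hφ2 (by norm_num)).continuous
  have hGc1 : ContDiff ℝ 1 G := contDiff_gradient (m := 1) hE (by norm_num)
  have hGc : Continuous G := hGc1.continuous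
  have hQ0 : ∀ x, x ∉ K → Q x = 0 := by
    intro x hx
    have hEq : φ =ᶠ[nhds x] fun _ => 0 := by
      filter_upwards [(isClosed_tsupport φ).isOpen_compl.mem_nhds hx] with y hy
        using image_eq_zero_of_notMem_tsupport hy
    rw [hQ, gradient, hEq.fderiv_eq, fderiv_fun_const]
    simp
  have hφ0 : ∀ x, x ∉ K → φ x = 0 := fun x hx => image_eq_zero_of_notMem_tsupport hx
  -- bound on φ and positivity radius
  obtain ⟨M, hM0, hMb⟩ : ∃ M : ℝ, 0 ≤ M ∧ ∀ x, |φ x| ≤ M := by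
    obtain ⟨C, hC⟩ := (hφ.continuous.abs).bounded_above_of_compact_support hφc.abs
    refine ⟨max C 0, le_max_right _ _, fun x => ?_⟩
    have := (hC x).trans (le_max_left C 0)
    simpa [abs_abs] using this
  obtain ⟨c, hc0, hcK⟩ : ∃ c : ℝ, 0 < c ∧ ∀ x ∈ K, c ≤ ρ x := by
    rcases K.eq_empty_or_nonempty with h | h
    · exact ⟨1, one_pos, by simp [h]⟩
    · obtain ⟨x₀, hx₀K, hmin⟩ := hKc.exists_isMinOn h hρ.continuous.continuousOn
      exact ⟨ρ x₀, hpos x₀, fun x hx => hmin hx⟩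
  set ε : ℝ := c / (M + 1) with hεdef
  have hε : 0 < ε := div_pos hc0 (by linarith)
  have hposs : ∀ s : ℝ, |s| < ε → ∀ x, 0 < ρ x + s * φ x := by
    intro s hs x
    by_cases hx : x ∈ K
    · have h1 : |s * φ x| ≤ |s| * M := by
        rw [abs_mul]
        exact mul_le_mul_of_nonneg_left (hMb x) (abs_nonneg s)
      have h2 : |s| * M < c := by
        calc |s| * M ≤ |s| * (M + 1) :=
              mul_le_mul_of_nonneg_left (by linarith) (abs_nonneg s)
          _ < ε * (M + 1) := by
              apply mul_lt_mul_of_pos_right hs (by linarith)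
          _ = c := div_mul_cancel₀ _ (by linarith)
      nlinarith [neg_abs_le (s * φ x), hcK x hx]
    · rw [hφ0 x hx, mul_zero, add_zero]; exact hpos x
  -- the nice forms of the integrand and its s-derivative
  set σ : ℝ → EuclideanSpace ℝ (Fin d) → ℝ := fun s x => ρ x + s * φ x with hσdef
  set u : ℝ → EuclideanSpace ℝ (Fin d) → EuclideanSpace ℝ (Fin d) :=
    fun s x => G x + (β⁻¹ * (σ s x)⁻¹) • (P x + s • Q x) with hudef
  set u' : ℝ → EuclideanSpace ℝ (Fin d) → EuclideanSpace ℝ (Fin d) :=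
    fun s x => (β⁻¹ * (σ s x)⁻¹) • Q x
      + (β⁻¹ * (-(φ x) / (σ s x) ^ 2)) • (P x + s • Q x) with hu'def
  set F : ℝ → EuclideanSpace ℝ (Fin d) → ℝ :=
    fun s x => (inner ℝ (u s x) (u s x) : ℝ) * σ s x with hFdef
  set F' : ℝ → EuclideanSpace ℝ (Fin d) → ℝ :=
    fun s x => ((inner ℝ (u s x) (u' s x) : ℝ) + (inner ℝ (u' s x) (u s x) : ℝ)) * σ s x
      + (inner ℝ (u s x) (u s x) : ℝ) * φ x with hF'def
  -- gradient of log (ρ + s φ)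
  have hgrad : ∀ s : ℝ, |s| < ε → ∀ x,
      gradient (fun y => Real.log (ρ y + s * φ y)) x = (σ s x)⁻¹ • (P x + s • Q x) := by
    intro s hs x
    have hdiff : Differentiable ℝ (fun y => ρ y + s * φ y) := fun y =>
      ((hρd y).add ((hφd y).const_mul s))
    rw [gradient_log_comp hdiff x (ne_of_gt (hposs s hs x)),
      gradient_add_smul_fun s hρd hφd x]
  have hFeq : ∀ s : ℝ, |s| < ε →
      (fun x => ‖gradient E x + β⁻¹ • gradient (fun y => Real.log (ρ y + s * φ y)) x‖ ^ 2
        * (ρ x + s * φ x)) = F s := by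
    intro s hs
    funext x
    rw [hgrad s hs x, hFdef]
    simp only [smul_smul]
    rw [← real_inner_self_eq_norm_sq]
  -- s-differentiability pointwise
  have hders : ∀ x, ∀ s ∈ Metric.ball (0 : ℝ) ε, HasDerivAt (fun t => F t x) (F' s x) s := by
    intro x s hs
    rw [Metric.mem_ball, Real.dist_eq, sub_zero] at hs
    have hσpos : 0 < σ s x := hposs s hs x
    have hσne : σ s x ≠ 0 := ne_of_gt hσpos
    have hσder : HasDerivAt (fun t => σ t x) (φ x) s := by
      simpa [hσdef] using (hasDerivAt_mul_const (φ x) (x := s)).const_add (ρ x)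
    have hinv : HasDerivAt (fun t => (σ t x)⁻¹) (-(φ x) / (σ s x) ^ 2) s := hσder.inv hσne
    have hsc : HasDerivAt (fun t => β⁻¹ * (σ t x)⁻¹) (β⁻¹ * (-(φ x) / (σ s x) ^ 2)) s :=
      hinv.const_mul β⁻¹
    have hw : HasDerivAt (fun t => P x + t • Q x) (Q x) s := by
      simpa using ((hasDerivAt_id s).smul_const (Q x)).const_add (P x)
    have hu : HasDerivAt (fun t => u t x) (u' s x) s := by
      have := (hsc.smul hw).const_add (G x)
      simpa [hudef, hu'def, smul_smul] using this
    have hinner : HasDerivAt (fun t => (inner ℝ (u t x) (u t x) : ℝ))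
        ((inner ℝ (u s x) (u' s x) : ℝ) + (inner ℝ (u' s x) (u s x) : ℝ)) s := hu.inner ℝ hu
    exact hinner.mul hσder
  -- vanishing of F' off K
  have hF'0 : ∀ s x, x ∉ K → F' s x = 0 := by
    intro s x hx
    simp [hF'def, hu'def, hQ0 x hx, hφ0 x hx]
  -- continuity of F and F' in x for fixed small s
  have hσcont : ∀ s : ℝ, Continuous (fun x => σ s x) := fun s =>
    hρ.continuous.add (continuous_const.mul hφ.continuous)
  have hFcont : ∀ s : ℝ, |s| < ε → Continuous (F s) := by
    intro s hs
    have hinv : Continuous (fun x => (σ s x)⁻¹) :=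
      (hσcont s).inv₀ (fun x => ne_of_gt (hposs s hs x))
    have hu : Continuous (u s) :=
      hGc.add ((continuous_const.mul hinv).smul (hPc.add (hQc.const_smul s)))
    exact (hu.inner hu).mul (hσcont s)
  have hF'cont : ∀ s : ℝ, |s| < ε → Continuous (F' s) := by
    intro s hs
    have hσne : ∀ x, σ s x ≠ 0 := fun x => ne_of_gt (hposs s hs x)
    have hinv : Continuous (fun x => (σ s x)⁻¹) := (hσcont s).inv₀ hσne
    have hwc : Continuous (fun x => P x + s • Q x) := hPc.add (hQc.const_smul s)
    have hu : Continuous (u s) := hGc.add ((continuous_const.mul hinv).smul hwc)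
    have hu' : Continuous (u' s) :=
      ((continuous_const.mul hinv).smul hQc).add
        ((continuous_const.mul ((hφ.continuous.neg).div ((hσcont s).pow 2)
          (fun x => pow_ne_zero 2 (hσne x)))).smul hwc)
    exact (((hu.inner hu').add (hu'.inner hu)).mul (hσcont s)).add
      ((hu.inner hu).mul hφ.continuous)
  -- uniform bound on F'
  obtain ⟨C, hC⟩ : ∃ C : ℝ, ∀ s x, s ∈ Metric.ball (0 : ℝ) (ε / 2) → x ∈ K → ‖F' s x‖ ≤ C := by
    set S : Set (ℝ × EuclideanSpace ℝ (Fin d)) := (Set.Icc (-(ε/2)) (ε/2)) ×ˢ K with hS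
    have hScomp : IsCompact S := isCompact_Icc.prod hKc
    have habs : ∀ p : ℝ × EuclideanSpace ℝ (Fin d), p ∈ S → |p.1| < ε := by
      intro p hp
      have h1 := hp.1.1
      have h2 := hp.1.2
      have : |p.1| ≤ ε / 2 := abs_le.2 ⟨h1, h2⟩
      linarith [half_lt_self hε]
    have hσS : ContinuousOn (fun p : ℝ × EuclideanSpace ℝ (Fin d) => σ p.1 p.2) S :=
      ((hρ.continuous.comp continuous_snd).add
        (continuous_fst.mul (hφ.continuous.comp continuous_snd))).continuousOn
    have hσneS : ∀ p ∈ S, σ p.1 p.2 ≠ 0 := fun p hp =>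
      ne_of_gt (hposs p.1 (habs p hp) p.2)
    have hinvS : ContinuousOn (fun p : ℝ × EuclideanSpace ℝ (Fin d) => (σ p.1 p.2)⁻¹) S :=
      hσS.inv₀ hσneS
    have hwS : ContinuousOn (fun p : ℝ × EuclideanSpace ℝ (Fin d) => P p.2 + p.1 • Q p.2) S :=
      ((hPc.comp continuous_snd).add (continuous_fst.smul (hQc.comp continuous_snd))).continuousOn
    have huS : ContinuousOn (fun p : ℝ × EuclideanSpace ℝ (Fin d) => u p.1 p.2) S :=
      ((hGc.comp continuous_snd).continuousOn).add
        ((continuousOn_const.mul hinvS).smul hwS)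
    have hu'S : ContinuousOn (fun p : ℝ × EuclideanSpace ℝ (Fin d) => u' p.1 p.2) S :=
      ((continuousOn_const.mul hinvS).smul ((hQc.comp continuous_snd).continuousOn)).add
        ((continuousOn_const.mul
          (((hφ.continuous.comp continuous_snd).neg.continuousOn).div
            ((hσS.pow 2)) (fun p hp => pow_ne_zero 2 (hσneS p hp)))).smul hwS)
    have hF'S : ContinuousOn (fun p : ℝ × EuclideanSpace ℝ (Fin d) => F' p.1 p.2) S :=
      (((huS.inner hu'S).add (hu'S.inner huS)).mul hσS).add
        ((huS.inner huS).mul ((hφ.continuous.comp continuous_snd).continuousOn))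
    obtain ⟨C, hC0⟩ := hScomp.exists_bound_of_continuousOn hF'S
    refine ⟨C, fun s x hs hx => ?_⟩
    rw [Metric.mem_ball, Real.dist_eq, sub_zero] at hs
    have := abs_lt.1 hs
    exact hC0 (s, x) ⟨⟨le_of_lt this.1, le_of_lt this.2⟩, hx⟩
  -- hypotheses for dominated differentiation
  have h1 : ∀ᶠ s in nhds (0 : ℝ), AEStronglyMeasurable (F s) volume := by
    filter_upwards [Metric.ball_mem_nhds (0 : ℝ) hε] with s hs
    rw [Metric.mem_ball, Real.dist_eq, sub_zero] at hs
    exact (hFcont s hs).aestronglyMeasurable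
  have hε0 : |(0 : ℝ)| < ε := by simpa using hε
  have h2 : Integrable (F 0) := by
    rw [← hFeq 0 hε0]
    simpa using hfin
  have h3 : AEStronglyMeasurable (F' 0) volume := (hF'cont 0 hε0).aestronglyMeasurable
  have h4 : ∀ᵐ x : EuclideanSpace ℝ (Fin d) ∂volume, ∀ s ∈ Metric.ball (0 : ℝ) (ε / 2),
      ‖F' s x‖ ≤ K.indicator (fun _ => C) x := by
    refine Filter.Eventually.of_forall (fun x s hs => ?_)
    by_cases hx : x ∈ K
    · rw [Set.indicator_of_mem hx]
      exact hC s x hs hx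
    · rw [Set.indicator_of_notMem hx, hF'0 s x hx, norm_zero]
  have h5 : Integrable (K.indicator fun _ : EuclideanSpace ℝ (Fin d) => C) :=
    (integrable_indicator_iff (isClosed_tsupport φ).measurableSet).2
      ((integrableOn_const_iff).2 (Or.inr hKc.measure_lt_top))
  have h6 : ∀ᵐ x : EuclideanSpace ℝ (Fin d) ∂volume, ∀ s ∈ Metric.ball (0 : ℝ) (ε / 2),
      HasDerivAt (fun t => F t x) (F' s x) s :=
    Filter.Eventually.of_forall (fun x s hs => hders x s
      (Metric.ball_subset_ball (by linarith) hs))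
  obtain ⟨hF'int, hder⟩ := hasDerivAt_integral_of_dominated_loc_of_deriv_le (μ := volume)
    (F := F) (F' := F') (x₀ := (0 : ℝ)) (bound := K.indicator fun _ => C)
    (Metric.ball_mem_nhds 0 (half_pos hε)) h1 h2 h3 h4 h5 h6
  -- the divergence part
  set g : EuclideanSpace ℝ (Fin d) → EuclideanSpace ℝ (Fin d) :=
    gradient (fun z => Real.log (ρ z)) with hg
  set V : EuclideanSpace ℝ (Fin d) → EuclideanSpace ℝ (Fin d) :=
    fun y => G y + β⁻¹ • g y with hV
  have hgradlog : ∀ x, g x = (ρ x)⁻¹ • P x := fun x => gradient_log_comp hρd x (hρne x)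
  have hgc1 : ContDiff ℝ 1 g := contDiff_gradient (m := 1) hlog2 (by norm_num)
  have hVc1 : ContDiff ℝ 1 V := hGc1.add (hgc1.const_smul β⁻¹)
  have hφV : ContDiff ℝ 1 (fun y => φ y • V y) := (hφ.of_le (WithTop.coe_le_coe.2 le_top)).smul hVc1
  have hφVc : HasCompactSupport (fun y => φ y • V y) := hφc.smul_right
  have hdiv := integral_trace_fderiv_eq_zero hφV hφVc
  have hDe : ∀ x, LinearMap.trace ℝ (EuclideanSpace ℝ (Fin d))
      ((fderiv ℝ (fun y => φ y • V y) x : _ →L[ℝ] _) : _ →ₗ[ℝ] _)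
      = (inner ℝ (Q x) (V x) : ℝ)
        + φ x * (laplacian E x + β⁻¹ * laplacian (fun z => Real.log (ρ z)) x) := by
    intro x
    have hVd : DifferentiableAt ℝ V x := (hVc1.differentiable one_ne_zero) x
    rw [fderiv_fun_smul (hφd x) hVd]
    have hfdV : fderiv ℝ V x = fderiv ℝ G x + β⁻¹ • fderiv ℝ g x := by
      rw [hV]
      rw [fderiv_fun_add (g := fun y => β⁻¹ • g y) ((hGc1.differentiable one_ne_zero) x)
        (((hgc1.differentiable one_ne_zero) x).const_smul β⁻¹),
        fderiv_fun_const_smul ((hgc1.differentiable one_ne_zero) x)]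
    simp only [ContinuousLinearMap.coe_add, ContinuousLinearMap.coe_smul, map_add,
      LinearMap.map_smul, trace_clm_smulRight, hfdV]
    rw [fderiv_apply_eq_inner]
    simp only [laplacian, hG, hg, smul_eq_mul]
    ring
  simp_rw [hDe] at hdiv
  -- integrability of the divergence expression and the target
  have htrc : Continuous (fun A : (EuclideanSpace ℝ (Fin d)) →L[ℝ] (EuclideanSpace ℝ (Fin d)) =>
      LinearMap.trace ℝ (EuclideanSpace ℝ (Fin d)) (A : _ →ₗ[ℝ] _)) :=
    LinearMap.continuous_of_finiteDimensional
      ((LinearMap.trace ℝ (EuclideanSpace ℝ (Fin d))) ∘ₗ (ContinuousLinearMap.coeLM ℝ))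
  have hlapE : Continuous (laplacian E) := htrc.comp (hGc1.continuous_fderiv one_ne_zero)
  have hlapg : Continuous (laplacian (fun z => Real.log (ρ z))) :=
    htrc.comp (hgc1.continuous_fderiv one_ne_zero)
  have hVcont : Continuous V := hVc1.continuous
  have hDvint : Integrable (fun x => (inner ℝ (Q x) (V x) : ℝ)
      + φ x * (laplacian E x + β⁻¹ * laplacian (fun z => Real.log (ρ z)) x)) := by
    apply Continuous.integrable_of_hasCompactSupport
    · exact (hQc.inner hVcont).add (hφ.continuous.mul
        (hlapE.add (continuous_const.mul hlapg)))
    · exact HasCompactSupport.intro hKc (fun x hx => by simp [hQ0 x hx, hφ0 x hx])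
  have hTint : Integrable (fun x => φ x * ((η / 4) * ‖G x‖ ^ 2 - (η / (2 * β)) * laplacian E x
      - (η / (4 * β ^ 2)) * (2 * laplacian (fun y => Real.log (ρ y)) x + ‖g x‖ ^ 2))) := by
    apply Continuous.integrable_of_hasCompactSupport
    · exact hφ.continuous.mul
        (((continuous_const.mul ((hGc.norm).pow 2)).sub
          (continuous_const.mul hlapE)).sub
          (continuous_const.mul ((continuous_const.mul hlapg).add ((hgc1.continuous.norm).pow 2))))
    · exact HasCompactSupport.intro hKc (fun x hx => by simp [hφ0 x hx])
  -- pointwise identity between the target integrand and F' 0 minus the divergence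
  have hkey : ∀ x, φ x * ((η / 4) * ‖G x‖ ^ 2 - (η / (2 * β)) * laplacian E x
      - (η / (4 * β ^ 2)) * (2 * laplacian (fun y => Real.log (ρ y)) x + ‖g x‖ ^ 2))
      = (η / 4) * F' 0 x - (η / (2 * β)) * ((inner ℝ (Q x) (V x) : ℝ)
        + φ x * (laplacian E x + β⁻¹ * laplacian (fun z => Real.log (ρ z)) x)) := by
    intro x
    have hPg : P x = (ρ x) • g x := by rw [hgradlog x, smul_inv_smul₀ (hρne x)]
    have halg := key_algebra (G x) (g x) (Q x) (ρ x) (φ x) (laplacian E x)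
      (laplacian (fun z => Real.log (ρ z)) x) β η (hρne x) hβ'
    have hσ0 : σ 0 x = ρ x := by simp [hσdef]
    have e1 : G x + β⁻¹ • g x = u 0 x := by
      simp [hudef, hσdef, hgradlog x, smul_smul]
    have e2 : (β⁻¹ * (ρ x)⁻¹) • Q x + (β⁻¹ * (-(φ x) / (ρ x) ^ 2)) • ((ρ x) • g x)
        = u' 0 x := by
      rw [← hPg]
      simp [hu'def, hσdef]
    have e3 : F' 0 x = ((inner ℝ (u 0 x) (u' 0 x) : ℝ) + (inner ℝ (u' 0 x) (u 0 x) : ℝ)) * ρ x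
        + (inner ℝ (u 0 x) (u 0 x) : ℝ) * φ x := by
      simp only [hF'def, hσ0]
    have e4 : V x = u 0 x := by rw [hV]; exact e1
    rw [e1, e2] at halg
    rw [e3, e4]
    exact halg
  -- final assembly
  have hT : ∫ x, φ x * ((η / 4) * ‖G x‖ ^ 2 - (η / (2 * β)) * laplacian E x
      - (η / (4 * β ^ 2)) * (2 * laplacian (fun y => Real.log (ρ y)) x + ‖g x‖ ^ 2))
      = (η / 4) * ∫ x, F' 0 x := by
    have : ∀ x, φ x * ((η / 4) * ‖G x‖ ^ 2 - (η / (2 * β)) * laplacian E x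
        - (η / (4 * β ^ 2)) * (2 * laplacian (fun y => Real.log (ρ y)) x + ‖g x‖ ^ 2))
        = (η / 4) * F' 0 x - (η / (2 * β)) * ((inner ℝ (Q x) (V x) : ℝ)
          + φ x * (laplacian E x + β⁻¹ * laplacian (fun z => Real.log (ρ z)) x)) := hkey
    rw [funext this, integral_sub (hF'int.const_mul _) (hDvint.const_mul _),
      integral_const_mul, integral_const_mul, hdiv]
    ring
  have heq : (fun s : ℝ => (η / 4) * ∫ x,
        ‖G x + β⁻¹ • gradient (fun y => Real.log (ρ y + s * φ y)) x‖ ^ 2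
          * (ρ x + s * φ x)) =ᶠ[nhds (0 : ℝ)] fun s => (η / 4) * ∫ x, F s x := by
    filter_upwards [Metric.ball_mem_nhds (0 : ℝ) hε] with s hs
    rw [Metric.mem_ball, Real.dist_eq, sub_zero] at hs
    rw [hFeq s hs]
  rw [hT]
  exact (hder.const_mul (η / 4)).congr_of_eventuallyEq heq
end

section
/- Let h > 0 and η > 0, and define T : ℝ → ℝ by T(x) = x − h( x³ − (3η/2) x⁵ ) = x − h x³ + (3hη/2) x⁵. Then T is monotone nondecreasing on ℝ (equivalently, T′(x) = 1 − 3h x² + (15hη/2) x⁴ ≥ 0 for all x ∈ ℝ) if and only if η ≥ 3h/10. -/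
/-!
`T' x = 1 - b x² + c x⁴` with `b = 3h`, `c = 15hη/2`, and `T` is monotone exactly when `T' ≥ 0`.
As a quadratic in `t = x² ≥ 0`, `1 - b t + c t²` dominates `(1 - b t / 2)²` when `b² ≤ 4c`,
and is negative at `t = 2 / b` otherwise. For `h > 0`, `b² ≤ 4c` reads `3h/10 ≤ η`.
-/

theorem monotone_iff_forall_hasDerivAt_nonneg {f f' : ℝ → ℝ}
    (hf : ∀ x, HasDerivAt f (f' x) x) : Monotone f ↔ ∀ x, 0 ≤ f' x :=
  ⟨fun hmono x => (hf x).nonneg_of_monotone hmono, fun hnonneg =>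
    monotone_of_deriv_nonneg (fun x => (hf x).differentiableAt) fun x => (hf x).deriv ▸ hnonneg x⟩

theorem forall_sq_iff_forall_nonneg (p : ℝ → Prop) :
    (∀ x : ℝ, p (x ^ 2)) ↔ ∀ t, 0 ≤ t → p t :=
  ⟨fun H t ht => Real.sq_sqrt ht ▸ H √t, fun H x => H _ (sq_nonneg x)⟩

theorem forall_nonneg_one_sub_mul_add_mul_sq_nonneg_iff {b c : ℝ} (hb : 0 < b) :
    (∀ t, 0 ≤ t → 0 ≤ 1 - b * t + c * t ^ 2) ↔ b ^ 2 ≤ 4 * c := by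
  constructor
  · intro H
    have hvertex := H (2 / b) (by positivity)
    have hvalue : 1 - b * (2 / b) + c * (2 / b) ^ 2 = (4 * c - b ^ 2) / b ^ 2 := by
      field_simp
      ring
    rw [hvalue, le_div_iff₀ (by positivity)] at hvertex
    linarith
  · intro hbc t _
    calc (0 : ℝ) ≤ (1 - b * t / 2) ^ 2 := sq_nonneg _
      _ = 1 - b * t + b ^ 2 / 4 * t ^ 2 := by ring
      _ ≤ 1 - b * t + c * t ^ 2 := by gcongr; linarith

theorem hasDerivAt_sub_mul_cube_sub_mul_pow_five (h η x : ℝ) :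
    HasDerivAt (fun x : ℝ => x - h * (x ^ 3 - (3 * η / 2) * x ^ 5))
      (1 - 3 * h * x ^ 2 + (15 * h * η / 2) * x ^ 4) x := by
  have hcube : HasDerivAt (fun x : ℝ => x ^ 3) (3 * x ^ 2) x := by
    simpa using hasDerivAt_pow 3 x
  have hfifth : HasDerivAt (fun x : ℝ => x ^ 5) (5 * x ^ 4) x := by
    simpa using hasDerivAt_pow 5 x
  exact ((hasDerivAt_id' x).fun_sub ((hcube.fun_sub (hfifth.const_mul (3 * η / 2))).const_mul h))
    |>.congr_deriv (by ring)

theorem jko_corrected_transport_monotone_iff_general (h η : ℝ) (hh : 0 < h) :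
    (Monotone (fun x : ℝ => x - h * (x ^ 3 - (3 * η / 2) * x ^ 5)) ↔ 3 * h / 10 ≤ η) ∧
    ((∀ x : ℝ, 0 ≤ 1 - 3 * h * x ^ 2 + (15 * h * η / 2) * x ^ 4) ↔ 3 * h / 10 ≤ η) := by
  have hdiscriminant : (3 * h) ^ 2 ≤ 4 * (15 * h * η / 2) ↔ 3 * h / 10 ≤ η := by
    constructor <;> intro _ <;> nlinarith
  have hderiv_nonneg_iff :
      (∀ x : ℝ, 0 ≤ 1 - 3 * h * x ^ 2 + (15 * h * η / 2) * x ^ 4) ↔ 3 * h / 10 ≤ η := by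
    simp only [show ∀ x : ℝ, x ^ 4 = (x ^ 2) ^ 2 from fun x => by ring]
    rw [forall_sq_iff_forall_nonneg (fun t => 0 ≤ 1 - 3 * h * t + (15 * h * η / 2) * t ^ 2),
      forall_nonneg_one_sub_mul_add_mul_sq_nonneg_iff (by positivity), hdiscriminant]
  refine ⟨?_, hderiv_nonneg_iff⟩
  rw [monotone_iff_forall_hasDerivAt_nonneg (hasDerivAt_sub_mul_cube_sub_mul_pow_five h η),
    hderiv_nonneg_iff]

/-- **Monotonicity criterion for the JKO-corrected transport map.**
For `h, η > 0`, the map `T(x) = x − h(x³ − (3η/2)x⁵)` is monotone nondecreasing on `ℝ`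
(equivalently `T′(x) = 1 − 3hx² + (15hη/2)x⁴ ≥ 0` for all `x`) if and only if
`η ≥ 3h/10`. -/
theorem jko_corrected_transport_monotone_iff (h η : ℝ) (hh : 0 < h) (hη : 0 < η) :
    (Monotone (fun x : ℝ => x - h * (x ^ 3 - (3 * η / 2) * x ^ 5)) ↔ 3 * h / 10 ≤ η) ∧
    ((∀ x : ℝ, 0 ≤ 1 - 3 * h * x ^ 2 + (15 * h * η / 2) * x ^ 4) ↔ 3 * h / 10 ≤ η) :=
  jko_corrected_transport_monotone_iff_general h η hh
end
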